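/- arXiv:2312.00156 — 2 statements merged into one kernel-verified Lean document; each statement's English description precedes it below -/
import Mathlib

section
/- Let i: X → A and j: Y → A be color Hopf subalgebras of a cocommutative color Hopf algebra A. Then the following are equivalent: (1) there exists a (necessarily unique) morphism of color Hopf algebras p: X ⊗ Y → A with p(x ⊗ 1) = x and p(1 ⊗ y) = y; (2) x y = φ(|x|,|y|) y x for all homogeneous x ∈ X, y ∈ Y; (3) φ(|x₂|,|y₁|) x₁ y₁ S(x₂) S(y₂) = ε(x) ε(y) 1 for all x ∈ X, y ∈ Y; (4) φ(|x₂|,|y|) x₁ y S(x₂) = ε(x) y for all homogeneous x ∈ X, y ∈ Y. -/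
open TensorProduct

namespace ColorHopfPaper

variable (k : Type*) [Field k] (G : Type*) [CommGroup G]

/-- The "middle interchange" map `(A⊗A)⊗(B⊗B) → (A⊗B)⊗(A⊗B)` built from a braiding
`c : A⊗B → B⊗A` applied to the two middle factors. -/
noncomputable def midMap {A B : Type*} [AddCommGroup A] [Module k A]
    [AddCommGroup B] [Module k B] (c : A ⊗[k] B →ₗ[k] B ⊗[k] A) :
    (A ⊗[k] A) ⊗[k] (B ⊗[k] B) →ₗ[k] (A ⊗[k] B) ⊗[k] (A ⊗[k] B) :=
  (TensorProduct.assoc k A B (A ⊗[k] B)).symm.toLinearMap ∘ₗ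
    (TensorProduct.map LinearMap.id
      ((TensorProduct.assoc k B A B).toLinearMap ∘ₗ
        (TensorProduct.map c LinearMap.id) ∘ₗ
        (TensorProduct.assoc k A B B).symm.toLinearMap)) ∘ₗ
    (TensorProduct.assoc k A A (B ⊗[k] B)).toLinearMap


/-- Generic Hopf kernel `{x : x₁ ⊗ f(x₂) = x ⊗ 1}` of `f`, for a comultiplication `Δ`. -/
noncomputable def hkerGen {X B : Type*} [AddCommGroup X] [Module k X]
    [AddCommGroup B] [Module k B]
    (Δ : X →ₗ[k] X ⊗[k] X) (f : X →ₗ[k] B) (oneB : B) : Submodule k X :=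
  LinearMap.ker (((TensorProduct.map LinearMap.id f) ∘ₗ Δ) -
    (TensorProduct.mk k X B).flip oneB)

/-- A (cocommutative) color Hopf algebra: a cocommutative Hopf monoid in the symmetric
monoidal category of `G`-graded `k`-vector spaces, with braiding given by a
skew-symmetric bicharacter `φ`. -/
structure ColorHopfAlg (H : Type*) [AddCommGroup H] [Module k H] where
  φ : G → G → k
  φ_ne : ∀ g h : G, φ g h ≠ 0
  φ_mul_left : ∀ g h l : G, φ (g * h) l = φ g l * φ h l
  φ_mul_right : ∀ g h l : G, φ g (h * l) = φ g h * φ g l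
  φ_skew : ∀ g h : G, φ g h * φ h g = 1
  grade : G → Submodule k H
  grade_top : ⨆ g : G, grade g = ⊤
  mul : H ⊗[k] H →ₗ[k] H
  one : H
  comul : H →ₗ[k] H ⊗[k] H
  counit : H →ₗ[k] k
  antipode : H →ₗ[k] H
  braid : H ⊗[k] H →ₗ[k] H ⊗[k] H
  braid_apply : ∀ (g h : G) (x y : H), x ∈ grade g → y ∈ grade h →
    braid (x ⊗ₜ[k] y) = φ g h • (y ⊗ₜ[k] x)
  one_mem : one ∈ grade 1
  mul_mem : ∀ (g h : G) (x y : H), x ∈ grade g → y ∈ grade h →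
    mul (x ⊗ₜ[k] y) ∈ grade (g * h)
  antipode_mem : ∀ (g : G) (x : H), x ∈ grade g → antipode x ∈ grade g
  mul_assoc' : ∀ x y z : H,
    mul (mul (x ⊗ₜ[k] y) ⊗ₜ[k] z) = mul (x ⊗ₜ[k] mul (y ⊗ₜ[k] z))
  one_mul' : ∀ x : H, mul (one ⊗ₜ[k] x) = x
  mul_one' : ∀ x : H, mul (x ⊗ₜ[k] one) = x
  coassoc : (TensorProduct.assoc k H H H).toLinearMap ∘ₗ
      (TensorProduct.map comul LinearMap.id) ∘ₗ comul
      = (TensorProduct.map LinearMap.id comul) ∘ₗ comul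
  counit_left : ∀ x : H,
    (TensorProduct.lid k H) ((TensorProduct.map counit LinearMap.id) (comul x)) = x
  counit_right : ∀ x : H,
    (TensorProduct.rid k H) ((TensorProduct.map LinearMap.id counit) (comul x)) = x
  comul_one : comul one = one ⊗ₜ[k] one
  counit_one : counit one = 1
  counit_mul : ∀ x y : H, counit (mul (x ⊗ₜ[k] y)) = counit x * counit y
  comul_mul : comul ∘ₗ mul =
    (TensorProduct.map mul mul) ∘ₗ midMap k braid ∘ₗ (TensorProduct.map comul comul)
  cocomm : braid ∘ₗ comul = comul
  antipode_left : ∀ x : H,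
    mul ((TensorProduct.map antipode LinearMap.id) (comul x)) = counit x • one
  antipode_right : ∀ x : H,
    mul ((TensorProduct.map LinearMap.id antipode) (comul x)) = counit x • one

namespace ColorHopfAlg

variable {k G}
variable {H : Type*} [AddCommGroup H] [Module k H] (C : ColorHopfAlg k G H)

/-- An element is homogeneous if it lies in one of the graded components. -/
def homogeneous (x : H) : Prop := ∃ g : G, x ∈ C.grade g

/-- The (color) adjoint action `ξ(a ⊗ b) = φ(|a₂|,|b|) a₁ b S(a₂)`. -/
noncomputable def adj : H ⊗[k] H →ₗ[k] H :=
  C.mul ∘ₗ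
    (TensorProduct.map LinearMap.id
      (C.mul ∘ₗ (TensorProduct.map LinearMap.id C.antipode) ∘ₗ C.braid)) ∘ₗ
    (TensorProduct.assoc k H H H).toLinearMap ∘ₗ
    (TensorProduct.map C.comul LinearMap.id)

/-- The commutator `[x,y] = φ(|x₂|,|y₁|) x₁y₁S(x₂)S(y₂) = (x ▷ y₁) S(y₂)`. -/
noncomputable def commMap : H ⊗[k] H →ₗ[k] H :=
  C.mul ∘ₗ (TensorProduct.map C.adj C.antipode) ∘ₗ
    (TensorProduct.assoc k H H H).symm.toLinearMap ∘ₗ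
    (TensorProduct.map LinearMap.id C.comul)

/-- The comultiplication of the tensor-product (product) coalgebra `H ⊗ H`:
`x ⊗ y ↦ φ(|x₂|,|y₁|) (x₁⊗y₁)⊗(x₂⊗y₂)`. -/
noncomputable def comul2 : H ⊗[k] H →ₗ[k] (H ⊗[k] H) ⊗[k] (H ⊗[k] H) :=
  midMap k C.braid ∘ₗ TensorProduct.map C.comul C.comul

/-- The counit of the tensor-product coalgebra `H ⊗ H`. -/
noncomputable def counit2 : H ⊗[k] H →ₗ[k] k :=
  (TensorProduct.lid k k).toLinearMap ∘ₗ TensorProduct.map C.counit C.counit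

/-- `V` is a (graded) color Hopf subalgebra of `H`. -/
structure IsCHSub (V : Submodule k H) : Prop where
  one_mem : C.one ∈ V
  mul_mem : ∀ x ∈ V, ∀ y ∈ V, C.mul (x ⊗ₜ[k] y) ∈ V
  comul_mem : ∀ x ∈ V,
    C.comul x ∈ LinearMap.range (TensorProduct.map V.subtype V.subtype)
  antipode_mem : ∀ x ∈ V, C.antipode x ∈ V
  graded : ∀ x ∈ V, x ∈ Submodule.span k {y : H | y ∈ V ∧ ∃ g : G, y ∈ C.grade g}

/-- `V` is normal: closed under the adjoint action of all of `H`. -/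
def IsNormal (V : Submodule k H) : Prop :=
  ∀ a : H, ∀ x ∈ V, C.adj (a ⊗ₜ[k] x) ∈ V

/-- The subalgebra (as a submodule) generated by a set. -/
def genFrom (Sgen : Set H) : Submodule k H :=
  sInf {V : Submodule k H |
    Sgen ⊆ ↑V ∧ C.one ∈ V ∧ ∀ x ∈ V, ∀ y ∈ V, C.mul (x ⊗ₜ[k] y) ∈ V}

/-- The commutator subalgebra `[X,Y]`, generated by all `[x,y]` with `x ∈ V`, `y ∈ W`. -/
def commSub (V W : Submodule k H) : Submodule k H :=
  C.genFrom {z : H | ∃ x ∈ V, ∃ y ∈ W, z = C.commMap (x ⊗ₜ[k] y)}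

/-- The graded subspace `VW` spanned by products `vw`. -/
def prodSpan (V W : Submodule k H) : Submodule k H :=
  Submodule.span k {z : H | ∃ x ∈ V, ∃ y ∈ W, z = C.mul (x ⊗ₜ[k] y)}

/-- The Hopf kernel `Hker(f) = {x : x₁ ⊗ f(x₂) = x ⊗ 1}` of a map `f : H → B`. -/
noncomputable def hkerOf {B : Type*} [AddCommGroup B] [Module k B]
    (CB : ColorHopfAlg k G B) (f : H →ₗ[k] B) : Submodule k H :=
  LinearMap.ker
    (((TensorProduct.map LinearMap.id f) ∘ₗ C.comul) -
      (TensorProduct.mk k H B).flip CB.one)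

end ColorHopfAlg

/-- A morphism of color Hopf algebras. -/
structure IsColorHom {A B : Type*} [AddCommGroup A] [Module k A]
    [AddCommGroup B] [Module k B]
    (CA : ColorHopfAlg k G A) (CB : ColorHopfAlg k G B) (f : A →ₗ[k] B) : Prop where
  map_mul : ∀ x y : A, f (CA.mul (x ⊗ₜ[k] y)) = CB.mul (f x ⊗ₜ[k] f y)
  map_one : f CA.one = CB.one
  map_comul : CB.comul ∘ₗ f = (TensorProduct.map f f) ∘ₗ CA.comul
  map_counit : CB.counit ∘ₗ f = CA.counit
  map_grade : ∀ g : G, ∀ x ∈ CA.grade g, f x ∈ CB.grade g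

/-- A color Hopf crossed module `(A, H, d)`. -/
structure ColorCrossedMod {A H : Type*} [AddCommGroup A] [Module k A]
    [AddCommGroup H] [Module k H]
    (CA : ColorHopfAlg k G A) (CH : ColorHopfAlg k G H) where
  cAH : A ⊗[k] H →ₗ[k] H ⊗[k] A
  cHA : H ⊗[k] A →ₗ[k] A ⊗[k] H
  cAH_apply : ∀ (g h : G) (a : A) (x : H), a ∈ CA.grade g → x ∈ CH.grade h →
    cAH (a ⊗ₜ[k] x) = CA.φ g h • (x ⊗ₜ[k] a)
  cHA_apply : ∀ (g h : G) (x : H) (a : A), x ∈ CH.grade g → a ∈ CA.grade h →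
    cHA (x ⊗ₜ[k] a) = CH.φ g h • (a ⊗ₜ[k] x)
  φ_eq : CH.φ = CA.φ
  act : A ⊗[k] H →ₗ[k] H
  act_one_left : ∀ x : H, act (CA.one ⊗ₜ[k] x) = x
  act_act : ∀ (a b : A) (x : H),
    act (a ⊗ₜ[k] act (b ⊗ₜ[k] x)) = act (CA.mul (a ⊗ₜ[k] b) ⊗ₜ[k] x)
  act_one : ∀ a : A, act (a ⊗ₜ[k] CH.one) = CA.counit a • CH.one
  counit_act : ∀ (a : A) (x : H),
    CH.counit (act (a ⊗ₜ[k] x)) = CA.counit a * CH.counit x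
  comul_act : CH.comul ∘ₗ act =
    (TensorProduct.map act act) ∘ₗ midMap k cAH ∘ₗ
      (TensorProduct.map CA.comul CH.comul)
  act_mul : act ∘ₗ (TensorProduct.map LinearMap.id CH.mul) =
    CH.mul ∘ₗ (TensorProduct.map act act) ∘ₗ midMap k cAH ∘ₗ
      (TensorProduct.map CA.comul LinearMap.id)
  act_grade : ∀ (g h : G) (a : A) (x : H), a ∈ CA.grade g → x ∈ CH.grade h →
    act (a ⊗ₜ[k] x) ∈ CH.grade (g * h)
  d : H →ₗ[k] A
  d_hom : IsColorHom k G CH CA d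
  peiffer₁ : d ∘ₗ act = CA.adj ∘ₗ (TensorProduct.map LinearMap.id d)
  peiffer₂ : act ∘ₗ (TensorProduct.map d LinearMap.id) = CH.adj

namespace ColorCrossedMod

variable {k G}
variable {A H : Type*} [AddCommGroup A] [Module k A] [AddCommGroup H] [Module k H]
variable {CA : ColorHopfAlg k G A} {CH : ColorHopfAlg k G H}

/-- The multiplication of the semi-direct (smash) product `H ⋊ A`:
`(h⊗a)(h'⊗a') = φ(|a₂|,|h'|) h (a₁·h') ⊗ a₂a'`. -/
noncomputable def smashMul (M : ColorCrossedMod k G CA CH) : (H ⊗[k] A) ⊗[k] (H ⊗[k] A) →ₗ[k] H ⊗[k] A :=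
  (TensorProduct.map CH.mul CA.mul) ∘ₗ
  (TensorProduct.assoc k (H ⊗[k] H) A A).toLinearMap ∘ₗ
  (TensorProduct.map (TensorProduct.assoc k H H A).symm.toLinearMap LinearMap.id) ∘ₗ
  (TensorProduct.map
    (TensorProduct.map LinearMap.id (TensorProduct.map M.act LinearMap.id))
    LinearMap.id) ∘ₗ
  (TensorProduct.map
    ((TensorProduct.map LinearMap.id
        ((TensorProduct.assoc k A H A).symm.toLinearMap ∘ₗ
          (TensorProduct.map LinearMap.id M.cAH) ∘ₗ
          (TensorProduct.assoc k A A H).toLinearMap)) ∘ₗ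
      (TensorProduct.assoc k H (A ⊗[k] A) H).toLinearMap)
    LinearMap.id) ∘ₗ
  (TensorProduct.assoc k (H ⊗[k] (A ⊗[k] A)) H A).symm.toLinearMap ∘ₗ
  (TensorProduct.map (TensorProduct.map LinearMap.id CA.comul) LinearMap.id)

/-- The comultiplication of `H ⋊ A` (tensor-product coalgebra twisted by `φ`). -/
noncomputable def smashComul (M : ColorCrossedMod k G CA CH) : H ⊗[k] A →ₗ[k] (H ⊗[k] A) ⊗[k] (H ⊗[k] A) :=
  midMap k M.cHA ∘ₗ TensorProduct.map CH.comul CA.comul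

/-- The counit of `H ⋊ A`. -/
noncomputable def smashCounit (_M : ColorCrossedMod k G CA CH) : H ⊗[k] A →ₗ[k] k :=
  (TensorProduct.lid k k).toLinearMap ∘ₗ TensorProduct.map CH.counit CA.counit

end ColorCrossedMod


section Aux

variable {k : Type*} [Field k] {G : Type*} [CommGroup G]
variable {H : Type*} [AddCommGroup H] [Module k H]

namespace ColorHopfAlg

variable (C : ColorHopfAlg k G H)

lemma φ_one_left (h : G) : C.φ 1 h = 1 := by
  have h1 := C.φ_mul_left 1 1 h
  rw [one_mul] at h1
  have hne := C.φ_ne 1 h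
  exact (mul_left_cancel₀ hne (by rw [← h1, mul_one])).symm

lemma mem_span_homog (x : H) : x ∈ Submodule.span k {y : H | C.homogeneous y} := by
  have h1 : (⊤ : Submodule k H) ≤ Submodule.span k {y : H | C.homogeneous y} := by
    rw [← C.grade_top]
    exact iSup_le fun g y hy => Submodule.subset_span ⟨g, hy⟩
  exact h1 Submodule.mem_top

lemma mem_span_tmul_homog_right (t : H ⊗[k] H) :
    t ∈ Submodule.span k
      {s : H ⊗[k] H | ∃ (a b : H) (g : G), b ∈ C.grade g ∧ s = a ⊗ₜ[k] b} := by
  induction t using TensorProduct.induction_on with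
  | zero => exact Submodule.zero_mem _
  | add u v hu hv => exact Submodule.add_mem _ hu hv
  | tmul a b =>
    have hb := C.mem_span_homog b
    induction hb using Submodule.span_induction with
    | mem y hy => obtain ⟨g, hg⟩ := hy; exact Submodule.subset_span ⟨a, y, g, hg, rfl⟩
    | zero => rw [tmul_zero]; exact Submodule.zero_mem _
    | add y z _ _ hy hz => rw [tmul_add]; exact Submodule.add_mem _ hy hz
    | smul c y _ hy => rw [tmul_smul]; exact Submodule.smul_mem _ c hy

/-- Pairs of homogeneous elements of a subalgebra. -/
def homPairSet (V : Submodule k H) : Set (H ⊗[k] H) :=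
  {s : H ⊗[k] H | ∃ (a b : H) (ga gb : G),
    a ∈ V ∧ a ∈ C.grade ga ∧ b ∈ V ∧ b ∈ C.grade gb ∧ s = a ⊗ₜ[k] b}

lemma tmul_mem_span_homPair {V : Submodule k H} (hV : C.IsCHSub V) {a b : H}
    (ha : a ∈ V) (hb : b ∈ V) :
    a ⊗ₜ[k] b ∈ Submodule.span k (C.homPairSet V) := by
  have haa := hV.graded a ha
  have hbb := hV.graded b hb
  clear ha hb
  induction haa using Submodule.span_induction with
  | mem y hy =>
    obtain ⟨hyV, g, hg⟩ := hy
    induction hbb using Submodule.span_induction with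
    | mem z hz =>
      obtain ⟨hzV, g', hg'⟩ := hz
      exact Submodule.subset_span ⟨y, z, g, g', hyV, hg, hzV, hg', rfl⟩
    | zero => rw [tmul_zero]; exact Submodule.zero_mem _
    | add y' z' _ _ hy' hz' => rw [tmul_add]; exact Submodule.add_mem _ hy' hz'
    | smul c y' _ hy' => rw [tmul_smul]; exact Submodule.smul_mem _ c hy'
  | zero => rw [zero_tmul]; exact Submodule.zero_mem _
  | add y z _ _ hy hz => rw [add_tmul]; exact Submodule.add_mem _ hy hz
  | smul c y _ hy => rw [← smul_tmul']; exact Submodule.smul_mem _ c hy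

lemma comul_mem_span_homPair {V : Submodule k H} (hV : C.IsCHSub V) {x : H}
    (hx : x ∈ V) : C.comul x ∈ Submodule.span k (C.homPairSet V) := by
  obtain ⟨t, ht⟩ := hV.comul_mem x hx
  rw [← ht]
  clear ht hx
  induction t using TensorProduct.induction_on with
  | zero => rw [map_zero]; exact Submodule.zero_mem _
  | add u v hu hv => rw [map_add]; exact Submodule.add_mem _ hu hv
  | tmul a b =>
    rw [TensorProduct.map_tmul]
    exact C.tmul_mem_span_homPair hV a.2 b.2

/-- `b ↦ φ(|b|,|y|) y ⬝ S(b)`. -/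
noncomputable def nuY (y : H) : H →ₗ[k] H :=
  C.mul ∘ₗ (TensorProduct.map LinearMap.id C.antipode) ∘ₗ C.braid ∘ₗ
    (TensorProduct.mk k H H).flip y

/-- `w ↦ φ(|w|,|y|) y ⬝ w`. -/
noncomputable def jY (y : H) : H →ₗ[k] H :=
  C.mul ∘ₗ C.braid ∘ₗ (TensorProduct.mk k H H).flip y

lemma nuY_apply (gb h : G) (b y : H) (hb : b ∈ C.grade gb) (hy : y ∈ C.grade h) :
    C.nuY y b = C.φ gb h • C.mul (y ⊗ₜ[k] C.antipode b) := by
  simp [nuY, C.braid_apply gb h b y hb hy]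

lemma jY_apply (gw h : G) (w y : H) (hw : w ∈ C.grade gw) (hy : y ∈ C.grade h) :
    C.jY y w = C.φ gw h • C.mul (y ⊗ₜ[k] w) := by
  simp [jY, C.braid_apply gw h w y hw hy]

lemma adj_tmul (x y : H) :
    C.adj (x ⊗ₜ[k] y) =
      C.mul ((TensorProduct.map LinearMap.id (C.nuY y)) (C.comul x)) := by
  have hadj : C.adj (x ⊗ₜ[k] y) =
      C.mul ((TensorProduct.map LinearMap.id
        (C.mul ∘ₗ (TensorProduct.map LinearMap.id C.antipode) ∘ₗ C.braid))
        ((TensorProduct.assoc k H H H) ((C.comul x) ⊗ₜ[k] y))) := by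
    simp [adj]
  rw [hadj]
  generalize C.comul x = s
  induction s using TensorProduct.induction_on with
  | zero => simp
  | tmul a b => simp [nuY]
  | add u v hu hv => simp only [add_tmul, map_add, hu, hv]

/-- The map `x ⊗ y ↦ φ(|x₂|,|y|) (x₁ ▷ y) x₂` (adjoint action distributed over `Δx`). -/
noncomputable def Emap (y : H) : H ⊗[k] H →ₗ[k] H :=
  C.mul ∘ₗ (TensorProduct.map C.adj LinearMap.id) ∘ₗ
    (TensorProduct.assoc k H H H).symm.toLinearMap ∘ₗ
    (TensorProduct.map LinearMap.id C.braid) ∘ₗ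
    (TensorProduct.assoc k H H H).toLinearMap ∘ₗ
    (TensorProduct.mk k (H ⊗[k] H) H).flip y

lemma Emap_tmul (g' h : G) (u u' y : H) (hu' : u' ∈ C.grade g')
    (hy : y ∈ C.grade h) :
    C.Emap y (u ⊗ₜ[k] u') = C.φ g' h • C.mul (C.adj (u ⊗ₜ[k] y) ⊗ₜ[k] u') := by
  simp [Emap, C.braid_apply g' h u' y hu' hy]

lemma jY_one (h : G) (y : H) (hy : y ∈ C.grade h) : C.jY y C.one = y := by
  rw [C.jY_apply 1 h C.one y C.one_mem hy, C.φ_one_left h, C.mul_one' y, one_smul]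

/-- Key unconditional identity: `φ(|x₂|,|y|) (x₁ ▷ y) x₂ = x y`. -/
lemma Emap_comul (h : G) (y : H) (hy : y ∈ C.grade h) (x : H) :
    C.Emap y (C.comul x) = C.mul (x ⊗ₜ[k] y) := by
  set F : H ⊗[k] H →ₗ[k] H :=
    C.mul ∘ₗ (TensorProduct.map LinearMap.id
      ((C.jY y) ∘ₗ C.mul ∘ₗ TensorProduct.map C.antipode LinearMap.id)) ∘ₗ
      (TensorProduct.assoc k H H H).toLinearMap ∘ₗ
      (TensorProduct.map C.comul LinearMap.id) with hF
  have hA : ∀ t : H ⊗[k] H, C.Emap y t = F t := by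
    intro t
    refine LinearMap.eqOn_span ?_ (C.mem_span_tmul_homog_right t)
    rintro s ⟨u, u', g', hu', rfl⟩
    have hQ : ∀ s : H ⊗[k] H,
        (C.φ g' h • (C.mul ∘ₗ (TensorProduct.mk k H H).flip u' ∘ₗ C.mul ∘ₗ
          TensorProduct.map LinearMap.id (C.nuY y))) s =
        (C.mul ∘ₗ (TensorProduct.map LinearMap.id
          ((C.jY y) ∘ₗ C.mul ∘ₗ TensorProduct.map C.antipode LinearMap.id)) ∘ₗ
          (TensorProduct.assoc k H H H).toLinearMap ∘ₗ
          (TensorProduct.mk k (H ⊗[k] H) H).flip u') s := by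
      intro s
      refine LinearMap.eqOn_span ?_ (C.mem_span_tmul_homog_right s)
      rintro s' ⟨a, b, gb, hb, rfl⟩
      simp only [LinearMap.comp_apply, LinearMap.smul_apply, LinearMap.flip_apply,
        TensorProduct.mk_apply, LinearEquiv.coe_coe, TensorProduct.assoc_tmul,
        TensorProduct.map_tmul, LinearMap.id_coe, id_eq]
      rw [C.nuY_apply gb h b y hb hy,
        C.jY_apply (gb * g') h (C.mul (C.antipode b ⊗ₜ[k] u')) y
          (C.mul_mem gb g' _ _ (C.antipode_mem gb b hb) hu') hy,
        C.φ_mul_left gb g' h]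
      simp only [tmul_smul, ← TensorProduct.smul_tmul', map_smul, smul_smul]
      rw [mul_comm (C.φ g' h) (C.φ gb h)]
      rw [C.mul_assoc' a (C.mul (y ⊗ₜ[k] C.antipode b)) u',
        C.mul_assoc' y (C.antipode b) u']
    have hq := hQ (C.comul u)
    rw [C.Emap_tmul g' h u u' y hu' hy, C.adj_tmul u y, hF]
    simp only [LinearMap.comp_apply, LinearMap.smul_apply, LinearMap.flip_apply,
      TensorProduct.mk_apply, LinearEquiv.coe_coe, TensorProduct.map_tmul,
      LinearMap.id_coe, id_eq] at hq ⊢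
    exact hq
  rw [hA (C.comul x), hF]
  have hco := LinearMap.congr_fun C.coassoc x
  simp only [LinearMap.comp_apply, LinearEquiv.coe_coe] at hco
  simp only [LinearMap.comp_apply, LinearEquiv.coe_coe]
  rw [hco]
  have hB : (C.mul ∘ₗ (TensorProduct.map LinearMap.id
      ((C.jY y) ∘ₗ C.mul ∘ₗ TensorProduct.map C.antipode LinearMap.id)) ∘ₗ
      (TensorProduct.map LinearMap.id C.comul)) =
      (C.mul ∘ₗ (TensorProduct.mk k H H).flip y ∘ₗ
        (TensorProduct.rid k H).toLinearMap ∘ₗ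
        (TensorProduct.map LinearMap.id C.counit)) := by
    refine TensorProduct.ext' fun a d => ?_
    simp only [LinearMap.comp_apply, TensorProduct.map_tmul, LinearMap.id_coe,
      id_eq, LinearEquiv.coe_coe, TensorProduct.rid_tmul, LinearMap.flip_apply,
      TensorProduct.mk_apply]
    rw [C.antipode_left d, map_smul, C.jY_one h y hy]
    simp only [tmul_smul, map_smul, ← TensorProduct.smul_tmul']
  have hB' := LinearMap.congr_fun hB (C.comul x)
  simp only [LinearMap.comp_apply, LinearEquiv.coe_coe, LinearMap.flip_apply,
    TensorProduct.mk_apply] at hB'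
  rw [hB', C.counit_right x]

/-- Key unconditional identity: `[x,y₁] y₂ = x ▷ y`. -/
lemma commMap_expand (x y : H) :
    C.mul ((TensorProduct.map C.commMap LinearMap.id)
      ((TensorProduct.assoc k H H H).symm (x ⊗ₜ[k] C.comul y))) =
    C.adj (x ⊗ₜ[k] y) := by
  set N : H ⊗[k] H →ₗ[k] H :=
    C.mul ∘ₗ (TensorProduct.map C.adj C.antipode) ∘ₗ
      (TensorProduct.assoc k H H H).symm.toLinearMap ∘ₗ
      (TensorProduct.mk k H (H ⊗[k] H) x) with hN
  have hNc : ∀ a : H, C.commMap (x ⊗ₜ[k] a) = N (C.comul a) := by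
    intro a
    simp [commMap, hN]
  have hi : (C.mul ∘ₗ (TensorProduct.map C.commMap LinearMap.id) ∘ₗ
      (TensorProduct.assoc k H H H).symm.toLinearMap ∘ₗ
      (TensorProduct.mk k H (H ⊗[k] H) x)) =
      (C.mul ∘ₗ (TensorProduct.map N LinearMap.id) ∘ₗ
        (TensorProduct.map C.comul LinearMap.id)) := by
    refine TensorProduct.ext' fun a b => ?_
    simp only [LinearMap.comp_apply, TensorProduct.mk_apply, LinearEquiv.coe_coe,
      TensorProduct.assoc_symm_tmul, TensorProduct.map_tmul, LinearMap.id_coe, id_eq]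
    rw [hNc a]
  have hiii : ∀ a : H, (C.mul ∘ₗ (TensorProduct.map N LinearMap.id) ∘ₗ
      (TensorProduct.assoc k H H H).symm.toLinearMap ∘ₗ
      (TensorProduct.mk k H (H ⊗[k] H) a)) =
      (C.mul ∘ₗ (TensorProduct.mk k H H (C.adj (x ⊗ₜ[k] a))) ∘ₗ C.mul ∘ₗ
        (TensorProduct.map C.antipode LinearMap.id)) := by
    intro a
    refine TensorProduct.ext' fun c d => ?_
    simp only [LinearMap.comp_apply, TensorProduct.mk_apply, LinearEquiv.coe_coe,
      TensorProduct.assoc_symm_tmul, TensorProduct.map_tmul, LinearMap.id_coe,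
      id_eq, hN]
    rw [C.mul_assoc' (C.adj (x ⊗ₜ[k] a)) (C.antipode c) d]
  have hii : (C.mul ∘ₗ (TensorProduct.map N LinearMap.id) ∘ₗ
      (TensorProduct.assoc k H H H).symm.toLinearMap ∘ₗ
      (TensorProduct.map LinearMap.id C.comul)) =
      (C.adj ∘ₗ (TensorProduct.mk k H H x) ∘ₗ
        (TensorProduct.rid k H).toLinearMap ∘ₗ
        (TensorProduct.map LinearMap.id C.counit)) := by
    refine TensorProduct.ext' fun a b => ?_
    have h3 := LinearMap.congr_fun (hiii a) (C.comul b)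
    simp only [LinearMap.comp_apply, TensorProduct.mk_apply, LinearEquiv.coe_coe] at h3
    simp only [LinearMap.comp_apply, TensorProduct.map_tmul, LinearMap.id_coe, id_eq,
      LinearEquiv.coe_coe, TensorProduct.rid_tmul, TensorProduct.mk_apply]
    rw [h3, C.antipode_left b]
    simp only [tmul_smul, map_smul]
    rw [C.mul_one' (C.adj (x ⊗ₜ[k] a))]
  have h1 := LinearMap.congr_fun hi (C.comul y)
  simp only [LinearMap.comp_apply, TensorProduct.mk_apply, LinearEquiv.coe_coe] at h1
  rw [h1]
  have hco := LinearMap.congr_fun C.coassoc y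
  simp only [LinearMap.comp_apply, LinearEquiv.coe_coe] at hco
  have hco' : (TensorProduct.map C.comul LinearMap.id) (C.comul y) =
      (TensorProduct.assoc k H H H).symm
        ((TensorProduct.map LinearMap.id C.comul) (C.comul y)) := by
    rw [← hco, LinearEquiv.symm_apply_apply]
  rw [hco']
  have h2 := LinearMap.congr_fun hii (C.comul y)
  simp only [LinearMap.comp_apply, TensorProduct.mk_apply, LinearEquiv.coe_coe] at h2
  rw [h2, C.counit_right y]

lemma imp24 {V W : Submodule k H} (hV : C.IsCHSub V) (hW : C.IsCHSub W)
    (h2 : ∀ (g h : G) (x y : H), x ∈ V → x ∈ C.grade g → y ∈ W → y ∈ C.grade h →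
      C.mul (x ⊗ₜ[k] y) = C.φ g h • C.mul (y ⊗ₜ[k] x)) :
    ∀ x ∈ V, ∀ y ∈ W, C.adj (x ⊗ₜ[k] y) = C.counit x • y := by
  intro x hx y hy
  have key : ∀ (h' : G) (z : H), z ∈ W → z ∈ C.grade h' →
      C.adj (x ⊗ₜ[k] z) = C.counit x • z := by
    intro h' z hzW hzh
    rw [C.adj_tmul x z]
    have hD := LinearMap.eqOn_span (s := C.homPairSet V)
      (f := C.mul ∘ₗ TensorProduct.map LinearMap.id (C.nuY z))
      (g := C.mul ∘ₗ (TensorProduct.mk k H H).flip z ∘ₗ C.mul ∘ₗ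
        TensorProduct.map LinearMap.id C.antipode) ?_ (C.comul_mem_span_homPair hV hx)
    · simp only [LinearMap.comp_apply, LinearMap.flip_apply, TensorProduct.mk_apply] at hD
      rw [hD, C.antipode_right x]
      simp only [← TensorProduct.smul_tmul', map_smul]
      rw [C.one_mul' z]
    · rintro s ⟨u, u', gu, g', huV, hug, hu'V, hu'g, rfl⟩
      simp only [LinearMap.comp_apply, TensorProduct.map_tmul, LinearMap.id_coe, id_eq,
        LinearMap.flip_apply, TensorProduct.mk_apply]
      rw [C.nuY_apply g' h' u' z hu'g hzh]
      have hcomm := h2 g' h' (C.antipode u') z (hV.antipode_mem u' hu'V)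
        (C.antipode_mem g' u' hu'g) hzW hzh
      rw [← hcomm, C.mul_assoc' u (C.antipode u') z]
  have hfin := LinearMap.eqOn_span (s := {z : H | z ∈ W ∧ ∃ g : G, z ∈ C.grade g})
    (f := C.adj ∘ₗ TensorProduct.mk k H H x)
    (g := C.counit x • (LinearMap.id : H →ₗ[k] H)) ?_ (hW.graded y hy)
  · simpa using hfin
  · rintro z ⟨hzW, g', hzg⟩
    simp only [LinearMap.comp_apply, TensorProduct.mk_apply, LinearMap.smul_apply,
      LinearMap.id_coe, id_eq]
    exact key g' z hzW hzg

lemma imp42 {V W : Submodule k H} (hV : C.IsCHSub V) (hW : C.IsCHSub W)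
    (h4 : ∀ x ∈ V, ∀ y ∈ W, C.adj (x ⊗ₜ[k] y) = C.counit x • y) :
    ∀ (g h : G) (x y : H), x ∈ V → x ∈ C.grade g → y ∈ W → y ∈ C.grade h →
      C.mul (x ⊗ₜ[k] y) = C.φ g h • C.mul (y ⊗ₜ[k] x) := by
  intro g h x y hxV hxg hyW hyh
  rw [← C.Emap_comul h y hyh x]
  have hC := LinearMap.eqOn_span (s := C.homPairSet V)
    (f := C.Emap y)
    (g := (C.jY y) ∘ₗ (TensorProduct.lid k H).toLinearMap ∘ₗ
      TensorProduct.map C.counit LinearMap.id) ?_ (C.comul_mem_span_homPair hV hxV)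
  · rw [hC]
    simp only [LinearMap.comp_apply, LinearEquiv.coe_coe]
    rw [C.counit_left x, C.jY_apply g h x y hxg hyh]
  · rintro s ⟨u, u', gu, g', huV, hug, hu'V, hu'g, rfl⟩
    rw [C.Emap_tmul g' h u u' y hu'g hyh, h4 u huV y hyW]
    simp only [LinearMap.comp_apply, TensorProduct.map_tmul, LinearMap.id_coe, id_eq,
      LinearEquiv.coe_coe, TensorProduct.lid_tmul, map_smul]
    rw [C.jY_apply g' h u' y hu'g hyh]
    simp only [← TensorProduct.smul_tmul', map_smul, smul_smul]
    rw [mul_comm (C.φ g' h) (C.counit u)]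

lemma imp43 {V W : Submodule k H} (hW : C.IsCHSub W)
    (h4 : ∀ x ∈ V, ∀ y ∈ W, C.adj (x ⊗ₜ[k] y) = C.counit x • y) :
    ∀ x ∈ V, ∀ y ∈ W, C.commMap (x ⊗ₜ[k] y) = (C.counit x * C.counit y) • C.one := by
  intro x hx y hy
  obtain ⟨t, ht⟩ := hW.comul_mem y hy
  have hc : C.commMap (x ⊗ₜ[k] y) =
      C.mul ((TensorProduct.map C.adj C.antipode)
        ((TensorProduct.assoc k H H H).symm (x ⊗ₜ[k] C.comul y))) := by
    simp [commMap]
  rw [hc, ← ht]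
  have claim : ∀ s : (↥W) ⊗[k] (↥W),
      C.mul ((TensorProduct.map C.adj C.antipode)
        ((TensorProduct.assoc k H H H).symm (x ⊗ₜ[k]
          (TensorProduct.map W.subtype W.subtype s)))) =
      C.counit x • C.mul ((TensorProduct.map LinearMap.id C.antipode)
        (TensorProduct.map W.subtype W.subtype s)) := by
    intro s
    induction s using TensorProduct.induction_on with
    | zero => simp
    | add u v hu hv => simp only [map_add, tmul_add, smul_add, hu, hv]
    | tmul w w' =>
      simp only [TensorProduct.map_tmul, Submodule.coe_subtype,
        TensorProduct.assoc_symm_tmul, LinearMap.id_coe, id_eq]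
      rw [h4 x hx w.1 w.2]
      simp only [← TensorProduct.smul_tmul', map_smul]
  rw [claim t, ht, C.antipode_right y, smul_smul]

lemma imp34 {V W : Submodule k H} (hW : C.IsCHSub W)
    (h3 : ∀ x ∈ V, ∀ y ∈ W, C.commMap (x ⊗ₜ[k] y) = (C.counit x * C.counit y) • C.one) :
    ∀ x ∈ V, ∀ y ∈ W, C.adj (x ⊗ₜ[k] y) = C.counit x • y := by
  intro x hx y hy
  rw [← C.commMap_expand x y]
  obtain ⟨t, ht⟩ := hW.comul_mem y hy
  rw [← ht]
  have claim : ∀ s : (↥W) ⊗[k] (↥W),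
      C.mul ((TensorProduct.map C.commMap LinearMap.id)
        ((TensorProduct.assoc k H H H).symm (x ⊗ₜ[k]
          (TensorProduct.map W.subtype W.subtype s)))) =
      C.counit x • (TensorProduct.lid k H) ((TensorProduct.map C.counit LinearMap.id)
        (TensorProduct.map W.subtype W.subtype s)) := by
    intro s
    induction s using TensorProduct.induction_on with
    | zero => simp
    | add u v hu hv => simp only [map_add, tmul_add, smul_add, hu, hv]
    | tmul w w' =>
      simp only [TensorProduct.map_tmul, Submodule.coe_subtype,
        TensorProduct.assoc_symm_tmul, LinearMap.id_coe, id_eq]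
      rw [h3 x hx w.1 w.2]
      simp only [← TensorProduct.smul_tmul', map_smul, TensorProduct.lid_tmul, smul_smul]
      rw [C.one_mul' (w' : H)]
  rw [claim t, ht, C.counit_left y]

end ColorHopfAlg

end Aux

section Statements

variable {H : Type*} [AddCommGroup H] [Module k H]

/-- for color Hopf subalgebras `X = V` and `Y = W` of `A`, the four
conditions (Huq commutation, color commutation, triviality of commutators, triviality
of the adjoint action) are equivalent. -/
theorem huq_commute_tfae (C : ColorHopfAlg k G H)
    (V W : Submodule k H) (hV : C.IsCHSub V) (hW : C.IsCHSub W) :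
    ((∃ p : H ⊗[k] H →ₗ[k] H,
        (∀ x ∈ V, p (x ⊗ₜ[k] C.one) = x) ∧
        (∀ y ∈ W, p (C.one ⊗ₜ[k] y) = y) ∧
        (∀ (g h : G) (x x' y y' : H), x ∈ V → x' ∈ V → y ∈ W → y' ∈ W →
          x' ∈ C.grade g → y ∈ C.grade h →
          C.mul (p (x ⊗ₜ[k] y) ⊗ₜ[k] p (x' ⊗ₜ[k] y')) =
            C.φ h g • p (C.mul (x ⊗ₜ[k] x') ⊗ₜ[k] C.mul (y ⊗ₜ[k] y'))) ∧
        (∀ x ∈ V, ∀ y ∈ W,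
          C.comul (p (x ⊗ₜ[k] y)) = (TensorProduct.map p p) (C.comul2 (x ⊗ₜ[k] y)) ∧
          C.counit (p (x ⊗ₜ[k] y)) = C.counit x * C.counit y)) ↔
      (∀ (g h : G) (x y : H), x ∈ V → x ∈ C.grade g → y ∈ W → y ∈ C.grade h →
        C.mul (x ⊗ₜ[k] y) = C.φ g h • C.mul (y ⊗ₜ[k] x))) ∧
    ((∀ (g h : G) (x y : H), x ∈ V → x ∈ C.grade g → y ∈ W → y ∈ C.grade h →
        C.mul (x ⊗ₜ[k] y) = C.φ g h • C.mul (y ⊗ₜ[k] x)) ↔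
      (∀ x ∈ V, ∀ y ∈ W,
        C.commMap (x ⊗ₜ[k] y) = (C.counit x * C.counit y) • C.one)) ∧
    ((∀ x ∈ V, ∀ y ∈ W,
        C.commMap (x ⊗ₜ[k] y) = (C.counit x * C.counit y) • C.one) ↔
      (∀ x ∈ V, ∀ y ∈ W, C.adj (x ⊗ₜ[k] y) = C.counit x • y)) := by
  refine ⟨⟨?_, ?_⟩, ⟨?_, ?_⟩, ⟨?_, ?_⟩⟩
  · -- (1) → (2)
    rintro ⟨p, hp1, hp2, hpm, -⟩ g h x y hxV hxg hyW hyh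
    have hpmul : ∀ x' ∈ V, ∀ y' ∈ W, p (x' ⊗ₜ[k] y') = C.mul (x' ⊗ₜ[k] y') := by
      intro x' hx' y' hy'
      have h0 := hpm 1 1 x' C.one C.one y' hx' hV.one_mem hW.one_mem hy'
        C.one_mem C.one_mem
      rw [hp1 x' hx', hp2 y' hy', C.mul_one' x', C.one_mul' y', C.φ_one_left 1,
        one_smul] at h0
      exact h0.symm
    have h1 := hpm g h C.one x y C.one hV.one_mem hxV hyW hW.one_mem hxg hyh
    rw [hp2 y hyW, hp1 x hxV, C.one_mul' x, C.mul_one' y, hpmul x hxV y hyW] at h1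
    rw [h1, smul_smul, C.φ_skew g h, one_smul]
  · -- (2) → (1)
    intro h2
    refine ⟨C.mul, fun x _ => C.mul_one' x, fun y _ => C.one_mul' y, ?_, ?_⟩
    · intro g h x x' y y' hx hx' hy hy' hx'g hyh
      have hswap : C.mul (y ⊗ₜ[k] x') = C.φ h g • C.mul (x' ⊗ₜ[k] y) := by
        rw [h2 g h x' y hx' hx'g hy hyh, smul_smul, C.φ_skew h g, one_smul]
      rw [C.mul_assoc' x y (C.mul (x' ⊗ₜ[k] y')), ← C.mul_assoc' y x' y', hswap]
      simp only [← TensorProduct.smul_tmul', map_smul, tmul_smul]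
      rw [C.mul_assoc' x' y y', ← C.mul_assoc' x x' (C.mul (y ⊗ₜ[k] y'))]
    · intro x hx y hy
      refine ⟨?_, C.counit_mul x y⟩
      have hcm := LinearMap.congr_fun C.comul_mul (x ⊗ₜ[k] y)
      simpa [ColorHopfAlg.comul2, LinearMap.comp_apply] using hcm
  · exact fun h2 => C.imp43 hW (C.imp24 hV hW h2)
  · exact fun h3 => C.imp42 hV hW (C.imp34 hW h3)
  · exact fun h3 => C.imp34 hW h3
  · exact fun h4 => C.imp43 hW h4


end Statements

end ColorHopfPaper
end

section
/- Let M and K be color Hopf subalgebras of a cocommutative color Hopf algebra A, with K normal in A. Then the graded vector subspaces KM and MK of A (spanned by products km, respectively mk, with k ∈ K, m ∈ M) are equal. -/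
open TensorProduct

namespace ColorHopfPaper

variable (k : Type*) [Field k] (G : Type*) [CommGroup G]

section Auxiliary

namespace ColorHopfAlg

variable {k : Type*} [Field k] {G : Type*} [CommGroup G]
variable {H : Type*} [AddCommGroup H] [Module k H] (C : ColorHopfAlg k G H)

open TensorProduct LinearMap

/-- The map `x ⊗ y ↦ φ(|x|,|y|) y S(x)`. -/
noncomputable def Q2 : H ⊗[k] H →ₗ[k] H :=
  C.mul ∘ₗ TensorProduct.map LinearMap.id C.antipode ∘ₗ C.braid

/-- `uE x = ε(x) • 1`. -/
noncomputable def uE : H →ₗ[k] H :=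
  LinearMap.toSpanSingleton k H C.one ∘ₗ C.counit

lemma uE_apply (x : H) : C.uE x = C.counit x • C.one := rfl

lemma adj_eq : C.adj = C.mul ∘ₗ TensorProduct.map LinearMap.id C.Q2 ∘ₗ
    (TensorProduct.assoc k H H H).toLinearMap ∘ₗ
    TensorProduct.map C.comul LinearMap.id := rfl

/-- Induction on homogeneous elements. -/
theorem homog_ind {P : H → Prop} (h0 : P 0) (hadd : ∀ x y, P x → P y → P (x + y))
    (hg : ∀ (g : G) (x : H), x ∈ C.grade g → P x) (x : H) : P x := by
  have hx : x ∈ ⨆ g : G, C.grade g := by rw [C.grade_top]; exact Submodule.mem_top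
  exact Submodule.iSup_induction (motive := P) _ hx hg h0 hadd

lemma phi_one_left (g : G) : C.φ 1 g = 1 := by
  have h := C.φ_mul_left 1 1 g
  rw [one_mul] at h
  have h2 : C.φ 1 g * 1 = C.φ 1 g * C.φ 1 g := by rw [mul_one, ← h]
  exact (mul_left_cancel₀ (C.φ_ne 1 g) h2).symm

lemma phi_one_right (g : G) : C.φ g 1 = 1 := by
  have h := C.φ_mul_right g 1 1
  rw [one_mul] at h
  have h2 : C.φ g 1 * 1 = C.φ g 1 * C.φ g 1 := by rw [mul_one, ← h]
  exact (mul_left_cancel₀ (C.φ_ne g 1) h2).symm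

lemma braid_one_left (y : H) : C.braid (C.one ⊗ₜ[k] y) = y ⊗ₜ[k] C.one := by
  induction y using C.homog_ind with
  | h0 => simp
  | hadd a b ha hb => rw [tmul_add, map_add, ha, hb, add_tmul]
  | hg g y hy => rw [C.braid_apply 1 g C.one y C.one_mem hy, C.phi_one_left, one_smul]

end ColorHopfAlg

end Auxiliary
section Aux2
namespace ColorHopfAlg
variable {k : Type*} [Field k] {G : Type*} [CommGroup G]
variable {H : Type*} [AddCommGroup H] [Module k H] (C : ColorHopfAlg k G H)
open TensorProduct LinearMap

lemma cocomm_pt (x : H) : C.braid (C.comul x) = C.comul x := by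
  have := LinearMap.congr_fun C.cocomm x
  simpa using this

lemma coassoc_pt (x : H) :
    (TensorProduct.assoc k H H H) ((TensorProduct.map C.comul LinearMap.id) (C.comul x))
      = (TensorProduct.map LinearMap.id C.comul) (C.comul x) := by
  have := LinearMap.congr_fun C.coassoc x
  simpa using this

lemma coassoc_symm_pt (x : H) :
    (TensorProduct.map C.comul LinearMap.id) (C.comul x)
      = (TensorProduct.assoc k H H H).symm ((TensorProduct.map LinearMap.id C.comul) (C.comul x)) := by
  rw [← C.coassoc_pt x, LinearEquiv.symm_apply_apply]

lemma counitL_pt (x : H) :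
    (TensorProduct.map C.counit LinearMap.id) (C.comul x) = (1:k) ⊗ₜ[k] x := by
  apply (TensorProduct.lid k H).injective
  rw [C.counit_left x]
  simp

lemma counitR_pt (x : H) :
    (TensorProduct.map LinearMap.id C.counit) (C.comul x) = x ⊗ₜ[k] (1:k) := by
  apply (TensorProduct.rid k H).injective
  rw [C.counit_right x]
  simp

/-- The key braid rearrangement lemma. -/
lemma KL :
    C.mul ∘ₗ TensorProduct.map C.Q2 LinearMap.id ∘ₗ (TensorProduct.assoc k H H H).symm.toLinearMap ∘ₗ
      TensorProduct.map LinearMap.id C.braid ∘ₗ (TensorProduct.assoc k H H H).toLinearMap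
    = C.mul ∘ₗ C.braid ∘ₗ TensorProduct.map (C.mul ∘ₗ TensorProduct.map C.antipode LinearMap.id) LinearMap.id := by
  apply TensorProduct.ext_threefold
  intro v w z
  induction v using C.homog_ind with
  | h0 => simp
  | hadd v1 v2 h1 h2 => simp only [add_tmul, map_add, h1, h2]
  | hg a v hv =>
    induction w using C.homog_ind with
    | h0 => simp
    | hadd w1 w2 h1 h2 => simp only [add_tmul, tmul_add, map_add, h1, h2]
    | hg b w hw =>
      induction z using C.homog_ind with
      | h0 => simp
      | hadd z1 z2 h1 h2 => simp only [tmul_add, map_add, h1, h2]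
      | hg t z hz =>
        simp only [LinearMap.comp_apply, LinearEquiv.coe_coe, TensorProduct.map_tmul,
          LinearMap.id_coe, id_eq, TensorProduct.assoc_tmul]
        rw [C.braid_apply b t w z hw hz]
        rw [C.braid_apply (a*b) t (C.mul (C.antipode v ⊗ₜ[k] w)) z
          (C.mul_mem a b _ _ (C.antipode_mem a v hv) hw) hz]
        simp only [tmul_smul, map_smul, TensorProduct.assoc_symm_tmul, TensorProduct.map_tmul,
          LinearMap.id_coe, id_eq, smul_tmul']
        rw [Q2]
        simp only [LinearMap.comp_apply, TensorProduct.map_tmul, LinearMap.id_coe, id_eq,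
          ← smul_tmul', map_smul]
        rw [C.braid_apply a t v z hv hz]
        simp only [map_smul, TensorProduct.map_tmul, LinearMap.id_coe, id_eq, smul_tmul',
          tmul_smul]
        rw [C.φ_mul_left, C.mul_assoc']
        simp only [← smul_tmul', map_smul, smul_smul]
        rw [mul_comm (C.φ b t) (C.φ a t)]
end ColorHopfAlg
end Aux2
section Aux3
namespace ColorHopfAlg
variable {k : Type*} [Field k] {G : Type*} [CommGroup G]
variable {H : Type*} [AddCommGroup H] [Module k H] (C : ColorHopfAlg k G H)
open TensorProduct LinearMap

lemma w1 (t : H ⊗[k] H) (y : H) :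
    C.mul ((TensorProduct.map C.antipode C.adj) ((TensorProduct.assoc k H H H) (t ⊗ₜ[k] y)))
      = C.mul ((TensorProduct.map (C.mul ∘ₗ TensorProduct.map C.antipode LinearMap.id) C.Q2)
          ((TensorProduct.assoc k (H ⊗[k] H) H H)
            ((TensorProduct.map (TensorProduct.assoc k H H H).symm.toLinearMap LinearMap.id)
              ((TensorProduct.map (TensorProduct.map LinearMap.id C.comul) LinearMap.id)
                (t ⊗ₜ[k] y))))) := by
  induction t using TensorProduct.induction_on with
  | zero => simp
  | add t1 t2 h1 h2 => simp only [add_tmul, map_add, h1, h2]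
  | tmul a b =>
    simp only [TensorProduct.map_tmul, LinearMap.id_coe, id_eq, TensorProduct.assoc_tmul,
      LinearEquiv.coe_coe]
    rw [C.adj_eq]
    simp only [LinearMap.comp_apply, TensorProduct.map_tmul, LinearMap.id_coe, id_eq,
      LinearEquiv.coe_coe]
    generalize C.comul b = u
    induction u using TensorProduct.induction_on with
    | zero => simp
    | add u1 u2 h1 h2 =>
        simp only [map_add, add_tmul, tmul_add, h1, h2]
    | tmul b1 b2 =>
        simp only [TensorProduct.assoc_tmul, TensorProduct.assoc_symm_tmul,
          TensorProduct.map_tmul, LinearMap.id_coe, id_eq, LinearEquiv.coe_coe,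
          LinearMap.comp_apply]
        rw [C.mul_assoc']

lemma w2 (s : (H ⊗[k] H) ⊗[k] H) (y : H) :
    C.mul ((TensorProduct.map (C.mul ∘ₗ TensorProduct.map C.antipode LinearMap.id) C.Q2)
        ((TensorProduct.assoc k (H ⊗[k] H) H H) (s ⊗ₜ[k] y)))
      = C.mul ((TensorProduct.map LinearMap.id C.Q2)
          ((TensorProduct.assoc k H H H)
            (((TensorProduct.map (C.mul ∘ₗ TensorProduct.map C.antipode LinearMap.id)
                LinearMap.id) s) ⊗ₜ[k] y))) := by
  induction s using TensorProduct.induction_on with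
  | zero => simp
  | add s1 s2 h1 h2 => simp only [add_tmul, map_add, h1, h2]
  | tmul u r =>
    simp only [TensorProduct.map_tmul, LinearMap.id_coe, id_eq, TensorProduct.assoc_tmul,
      LinearEquiv.coe_coe]

lemma w3 (t : H ⊗[k] H) (y : H) :
    C.mul ((TensorProduct.map LinearMap.id C.Q2)
        ((TensorProduct.assoc k H H H) (((TensorProduct.map C.uE LinearMap.id) t) ⊗ₜ[k] y)))
      = C.Q2 (((TensorProduct.lid k H) ((TensorProduct.map C.counit LinearMap.id) t)) ⊗ₜ[k] y) := by
  induction t using TensorProduct.induction_on with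
  | zero => simp
  | add t1 t2 h1 h2 => simp only [add_tmul, map_add, h1, h2]
  | tmul p q =>
    simp only [TensorProduct.map_tmul, LinearMap.id_coe, id_eq, TensorProduct.assoc_tmul,
      LinearEquiv.coe_coe, TensorProduct.lid_tmul, uE_apply]
    simp only [← smul_tmul', map_smul, C.one_mul']

/-- The identity `k S(x) = Σ S(x₁)(x₂ ▷ k)` in map form:  `W(x⊗y) = Q2(x⊗y)`. -/
theorem W_pt (x y : H) :
    C.mul ((TensorProduct.map C.antipode C.adj)
        ((TensorProduct.assoc k H H H) ((C.comul x) ⊗ₜ[k] y)))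
      = C.Q2 (x ⊗ₜ[k] y) := by
  rw [C.w1]
  have e1 : (TensorProduct.map (TensorProduct.map LinearMap.id C.comul) LinearMap.id)
      ((C.comul x) ⊗ₜ[k] y)
      = ((TensorProduct.map LinearMap.id C.comul) (C.comul x)) ⊗ₜ[k] y := by
    simp
  rw [e1]
  have e2 : (TensorProduct.map (TensorProduct.assoc k H H H).symm.toLinearMap LinearMap.id)
      (((TensorProduct.map LinearMap.id C.comul) (C.comul x)) ⊗ₜ[k] y)
      = ((TensorProduct.map C.comul LinearMap.id) (C.comul x)) ⊗ₜ[k] y := by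
    simp only [TensorProduct.map_tmul, LinearMap.id_coe, id_eq, LinearEquiv.coe_toLinearMap]
    rw [← C.coassoc_symm_pt]
  rw [e2, C.w2]
  have e3 : (TensorProduct.map (C.mul ∘ₗ TensorProduct.map C.antipode LinearMap.id) LinearMap.id)
      ((TensorProduct.map C.comul LinearMap.id) (C.comul x))
      = (TensorProduct.map C.uE LinearMap.id) (C.comul x) := by
    have h1 : ∀ t : H ⊗[k] H,
        (TensorProduct.map (C.mul ∘ₗ TensorProduct.map C.antipode LinearMap.id) LinearMap.id)
          ((TensorProduct.map C.comul LinearMap.id) t)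
        = (TensorProduct.map ((C.mul ∘ₗ TensorProduct.map C.antipode LinearMap.id) ∘ₗ C.comul)
            LinearMap.id) t := by
      intro t
      induction t using TensorProduct.induction_on with
      | zero => simp
      | add a b ha hb => simp only [map_add, ha, hb]
      | tmul a b => simp
    rw [h1]
    have h2 : (C.mul ∘ₗ TensorProduct.map C.antipode LinearMap.id) ∘ₗ C.comul = C.uE := by
      ext z
      simp only [LinearMap.comp_apply]
      rw [C.antipode_left z, uE_apply]
    rw [h2]
  rw [e3, C.w3, C.counit_left x]

end ColorHopfAlg
end Aux3
section Aux4
namespace ColorHopfAlg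
variable {k : Type*} [Field k] {G : Type*} [CommGroup G]
variable {H : Type*} [AddCommGroup H] [Module k H] (C : ColorHopfAlg k G H)
open TensorProduct LinearMap

lemma t1 (t : H ⊗[k] H) (y : H) :
    C.mul ((TensorProduct.map C.adj LinearMap.id)
        ((TensorProduct.assoc k H H H).symm
          ((TensorProduct.map LinearMap.id C.braid)
            ((TensorProduct.assoc k H H H) (t ⊗ₜ[k] y)))))
      = C.mul ((TensorProduct.map
            (C.mul ∘ₗ TensorProduct.map LinearMap.id C.Q2 ∘ₗ (TensorProduct.assoc k H H H).toLinearMap)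
            LinearMap.id)
          ((TensorProduct.assoc k (H ⊗[k] H) H H).symm
            ((TensorProduct.map LinearMap.id C.braid)
              ((TensorProduct.assoc k (H ⊗[k] H) H H)
                (((TensorProduct.map C.comul LinearMap.id) t) ⊗ₜ[k] y))))) := by
  induction t using TensorProduct.induction_on with
  | zero => simp
  | add t1 t2 h1 h2 => simp only [add_tmul, map_add, h1, h2]
  | tmul a b =>
    simp only [TensorProduct.map_tmul, LinearMap.id_coe, id_eq, TensorProduct.assoc_tmul,
      LinearEquiv.coe_coe]
    generalize C.braid (b ⊗ₜ[k] y) = u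
    induction u using TensorProduct.induction_on with
    | zero => simp
    | add u1 u2 h1 h2 => simp only [map_add, tmul_add, h1, h2]
    | tmul k' b' =>
      simp only [TensorProduct.assoc_symm_tmul, TensorProduct.map_tmul, LinearMap.id_coe, id_eq]
      rw [C.adj_eq]
      simp only [LinearMap.comp_apply, TensorProduct.map_tmul, LinearMap.id_coe, id_eq,
        LinearEquiv.coe_coe]

lemma t3 (s : H ⊗[k] (H ⊗[k] H)) (y : H) :
    C.mul ((TensorProduct.map
          (C.mul ∘ₗ TensorProduct.map LinearMap.id C.Q2 ∘ₗ (TensorProduct.assoc k H H H).toLinearMap)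
          LinearMap.id)
        ((TensorProduct.assoc k (H ⊗[k] H) H H).symm
          ((TensorProduct.map LinearMap.id C.braid)
            ((TensorProduct.assoc k (H ⊗[k] H) H H)
              (((TensorProduct.assoc k H H H).symm s) ⊗ₜ[k] y)))))
      = C.mul ((TensorProduct.map LinearMap.id
            (C.mul ∘ₗ TensorProduct.map C.Q2 LinearMap.id ∘ₗ (TensorProduct.assoc k H H H).symm.toLinearMap ∘ₗ
              TensorProduct.map LinearMap.id C.braid ∘ₗ (TensorProduct.assoc k H H H).toLinearMap))
          ((TensorProduct.assoc k H (H ⊗[k] H) H) (s ⊗ₜ[k] y))) := by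
  induction s using TensorProduct.induction_on with
  | zero => simp
  | add s1 s2 h1 h2 => simp only [add_tmul, map_add, h1, h2]
  | tmul p w =>
    induction w using TensorProduct.induction_on with
    | zero => simp
    | add w1 w2 h1 h2 => simp only [map_add, tmul_add, add_tmul, h1, h2]
    | tmul q r =>
      simp only [TensorProduct.assoc_symm_tmul, TensorProduct.assoc_tmul,
        TensorProduct.map_tmul, LinearMap.id_coe, id_eq, LinearEquiv.coe_coe,
        LinearMap.comp_apply]
      generalize C.braid (r ⊗ₜ[k] y) = u
      induction u using TensorProduct.induction_on with
      | zero => simp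
      | add u1 u2 h1 h2 => simp only [map_add, tmul_add, h1, h2]
      | tmul k' r' =>
        simp only [TensorProduct.assoc_symm_tmul, TensorProduct.assoc_tmul,
          TensorProduct.map_tmul, LinearMap.id_coe, id_eq, LinearEquiv.coe_coe,
          LinearMap.comp_apply]
        rw [C.mul_assoc']

lemma t5 (t : H ⊗[k] H) (y : H) :
    C.mul ((TensorProduct.map LinearMap.id
          (C.mul ∘ₗ C.braid ∘ₗ
            TensorProduct.map (C.mul ∘ₗ TensorProduct.map C.antipode LinearMap.id) LinearMap.id))
        ((TensorProduct.assoc k H (H ⊗[k] H) H)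
          (((TensorProduct.map LinearMap.id C.comul) t) ⊗ₜ[k] y)))
      = C.mul (((TensorProduct.rid k H) ((TensorProduct.map LinearMap.id C.counit) t)) ⊗ₜ[k] y) := by
  induction t using TensorProduct.induction_on with
  | zero => simp
  | add t1 t2 h1 h2 => simp only [add_tmul, map_add, h1, h2]
  | tmul x1 x2 =>
    simp only [TensorProduct.map_tmul, LinearMap.id_coe, id_eq, TensorProduct.assoc_tmul,
      LinearEquiv.coe_coe, TensorProduct.rid_tmul, LinearMap.comp_apply]
    rw [C.antipode_left x2]
    simp only [← smul_tmul', map_smul, tmul_smul]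
    rw [C.braid_one_left, C.mul_one']

/-- The identity `xy = Σ (x₁ ▷ y) x₂` in map form: `T(x⊗y) = μ(x⊗y)`. -/
theorem T_pt (x y : H) :
    C.mul ((TensorProduct.map C.adj LinearMap.id)
        ((TensorProduct.assoc k H H H).symm
          ((TensorProduct.map LinearMap.id C.braid)
            ((TensorProduct.assoc k H H H) ((C.comul x) ⊗ₜ[k] y)))))
      = C.mul (x ⊗ₜ[k] y) := by
  rw [C.t1, C.coassoc_symm_pt, C.t3]
  rw [C.KL, C.t5, C.counit_right x]

end ColorHopfAlg
end Aux4
section Aux5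
namespace ColorHopfAlg
variable {k : Type*} [Field k] {G : Type*} [CommGroup G]

/-- merge two `map`s applied to an element -/
lemma map_merge {A B A' B' A'' B'' : Type*}
    [AddCommGroup A] [Module k A] [AddCommGroup B] [Module k B]
    [AddCommGroup A'] [Module k A'] [AddCommGroup B'] [Module k B']
    [AddCommGroup A''] [Module k A''] [AddCommGroup B''] [Module k B'']
    (f₂ : A' →ₗ[k] A'') (f₁ : A →ₗ[k] A') (g₂ : B' →ₗ[k] B'') (g₁ : B →ₗ[k] B')
    (t : A ⊗[k] B) :
    (TensorProduct.map f₂ g₂) ((TensorProduct.map f₁ g₁) t)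
      = (TensorProduct.map (f₂ ∘ₗ f₁) (g₂ ∘ₗ g₁)) t := by
  rw [TensorProduct.map_comp]; rfl

lemma assoc_symm_nat {A B D A' B' D' : Type*}
    [AddCommGroup A] [Module k A] [AddCommGroup B] [Module k B]
    [AddCommGroup D] [Module k D]
    [AddCommGroup A'] [Module k A'] [AddCommGroup B'] [Module k B']
    [AddCommGroup D'] [Module k D']
    (f : A →ₗ[k] A') (g : B →ₗ[k] B') (h : D →ₗ[k] D') (s : A ⊗[k] (B ⊗[k] D)) :
    (TensorProduct.map (TensorProduct.map f g) h) ((TensorProduct.assoc k A B D).symm s)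
      = (TensorProduct.assoc k A' B' D').symm
          ((TensorProduct.map f (TensorProduct.map g h)) s) := by
  induction s using TensorProduct.induction_on with
  | zero => simp
  | add s1 s2 h1 h2 => simp only [map_add, h1, h2]
  | tmul a t =>
    induction t using TensorProduct.induction_on with
    | zero => simp
    | add t1 t2 h1 h2 => simp only [map_add, tmul_add, h1, h2]
    | tmul b d => simp

variable {H : Type*} [AddCommGroup H] [Module k H] (C : ColorHopfAlg k G H)

open TensorProduct LinearMap

/-- generic convolution associativity -/
lemma conv_assoc {A : Type*} [AddCommGroup A] [Module k A] (m : A ⊗[k] A →ₗ[k] A)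
    (hm : ∀ u : (A ⊗[k] A) ⊗[k] A,
      m ((TensorProduct.map m LinearMap.id) u)
        = m ((TensorProduct.map LinearMap.id m) ((TensorProduct.assoc k A A A) u)))
    (f g h : H →ₗ[k] A) :
    m ∘ₗ TensorProduct.map (m ∘ₗ TensorProduct.map f g ∘ₗ C.comul) h ∘ₗ C.comul
      = m ∘ₗ TensorProduct.map f (m ∘ₗ TensorProduct.map g h ∘ₗ C.comul) ∘ₗ C.comul := by
  ext x
  simp only [LinearMap.comp_apply]
  have e1 : (TensorProduct.map (m ∘ₗ TensorProduct.map f g ∘ₗ C.comul) h) (C.comul x)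
      = (TensorProduct.map m LinearMap.id)
          ((TensorProduct.map (TensorProduct.map f g) h)
            ((TensorProduct.map C.comul LinearMap.id) (C.comul x))) := by
    rw [map_merge, map_merge]
    simp only [LinearMap.comp_assoc, LinearMap.id_comp, LinearMap.comp_id]
  rw [e1, C.coassoc_symm_pt, assoc_symm_nat, hm, LinearEquiv.apply_symm_apply]
  rw [map_merge, map_merge]
  simp only [LinearMap.id_comp, LinearMap.comp_id, LinearMap.comp_assoc]

/-- generic convolution right unit law -/
lemma conv_unit_right {A : Type*} [AddCommGroup A] [Module k A] (m : A ⊗[k] A →ₗ[k] A)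
    (uu : A) (hu : ∀ t : A, m (t ⊗ₜ[k] uu) = t) (f : H →ₗ[k] A) :
    m ∘ₗ TensorProduct.map f (LinearMap.toSpanSingleton k A uu ∘ₗ C.counit) ∘ₗ C.comul = f := by
  ext x
  simp only [LinearMap.comp_apply]
  have e1 : (TensorProduct.map f (LinearMap.toSpanSingleton k A uu ∘ₗ C.counit)) (C.comul x)
      = (TensorProduct.map f (LinearMap.toSpanSingleton k A uu))
          ((TensorProduct.map LinearMap.id C.counit) (C.comul x)) := by
    rw [map_merge]
    simp only [LinearMap.comp_id, LinearMap.id_comp]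
  rw [e1, C.counitR_pt]
  simp [hu]

/-- generic convolution left unit law -/
lemma conv_unit_left {A : Type*} [AddCommGroup A] [Module k A] (m : A ⊗[k] A →ₗ[k] A)
    (uu : A) (hu : ∀ t : A, m (uu ⊗ₜ[k] t) = t) (f : H →ₗ[k] A) :
    m ∘ₗ TensorProduct.map (LinearMap.toSpanSingleton k A uu ∘ₗ C.counit) f ∘ₗ C.comul = f := by
  ext x
  simp only [LinearMap.comp_apply]
  have e1 : (TensorProduct.map (LinearMap.toSpanSingleton k A uu ∘ₗ C.counit) f) (C.comul x)
      = (TensorProduct.map (LinearMap.toSpanSingleton k A uu) f)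
          ((TensorProduct.map C.counit LinearMap.id) (C.comul x)) := by
    rw [map_merge]
    simp only [LinearMap.comp_id, LinearMap.id_comp]
  rw [e1, C.counitL_pt]
  simp [hu]

/-- the product on `H ⊗ H` -/
noncomputable def mu2 : (H ⊗[k] H) ⊗[k] (H ⊗[k] H) →ₗ[k] H ⊗[k] H :=
  (TensorProduct.map C.mul C.mul) ∘ₗ midMap k C.braid

lemma comul_mul_pt (t : H ⊗[k] H) :
    C.comul (C.mul t) = C.mu2 ((TensorProduct.map C.comul C.comul) t) := by
  have := LinearMap.congr_fun C.comul_mul t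
  simpa [mu2] using this

lemma mu2_tmul (b c : G) (y z : H) (hy : y ∈ C.grade b) (hz : z ∈ C.grade c)
    (x w : H) :
    C.mu2 ((x ⊗ₜ[k] y) ⊗ₜ[k] (z ⊗ₜ[k] w))
      = C.φ b c • (C.mul (x ⊗ₜ[k] z) ⊗ₜ[k] C.mul (y ⊗ₜ[k] w)) := by
  simp only [mu2, midMap, LinearMap.comp_apply, LinearEquiv.coe_coe,
    TensorProduct.assoc_tmul, TensorProduct.assoc_symm_tmul, TensorProduct.map_tmul,
    LinearMap.id_coe, id_eq]
  rw [C.braid_apply b c y z hy hz]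
  simp only [← smul_tmul', map_smul, tmul_smul, TensorProduct.assoc_tmul,
    TensorProduct.assoc_symm_tmul, TensorProduct.map_tmul, LinearMap.id_coe, id_eq]

lemma mu2_one_right (t : H ⊗[k] H) : C.mu2 (t ⊗ₜ[k] (C.one ⊗ₜ[k] C.one)) = t := by
  induction t using TensorProduct.induction_on with
  | zero => simp
  | add t1 t2 h1 h2 => simp only [add_tmul, map_add, h1, h2]
  | tmul x y =>
    induction y using C.homog_ind with
    | h0 => simp
    | hadd y1 y2 h1 h2 => simp only [tmul_add, add_tmul, map_add, h1, h2]
    | hg b y hy =>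
      rw [C.mu2_tmul b 1 y C.one hy C.one_mem, C.phi_one_right, C.mul_one', C.mul_one', one_smul]

lemma mu2_one_left (t : H ⊗[k] H) : C.mu2 ((C.one ⊗ₜ[k] C.one) ⊗ₜ[k] t) = t := by
  induction t using TensorProduct.induction_on with
  | zero => simp
  | add t1 t2 h1 h2 => simp only [tmul_add, map_add, h1, h2]
  | tmul z w =>
    induction z using C.homog_ind with
    | h0 => simp
    | hadd z1 z2 h1 h2 => simp only [tmul_add, add_tmul, map_add, h1, h2]
    | hg c z hz =>
      rw [C.mu2_tmul 1 c C.one z C.one_mem hz, C.phi_one_left, C.one_mul', C.one_mul', one_smul]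

lemma mu2_assoc_pt (u : ((H ⊗[k] H) ⊗[k] (H ⊗[k] H)) ⊗[k] (H ⊗[k] H)) :
    C.mu2 ((TensorProduct.map C.mu2 LinearMap.id) u)
      = C.mu2 ((TensorProduct.map LinearMap.id C.mu2)
          ((TensorProduct.assoc k (H ⊗[k] H) (H ⊗[k] H) (H ⊗[k] H)) u)) := by
  induction u using TensorProduct.induction_on with
  | zero => simp
  | add u1 u2 h1 h2 => simp only [map_add, h1, h2]
  | tmul st u3 =>
    induction st using TensorProduct.induction_on with
    | zero => simp only [zero_tmul, map_zero]
    | add s1 s2 h1 h2 => simp only [add_tmul, map_add, h1, h2]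
    | tmul s t =>
      induction s using TensorProduct.induction_on with
      | zero => simp only [zero_tmul, map_zero]
      | add s1 s2 h1 h2 => simp only [add_tmul, map_add, h1, h2]
      | tmul a b =>
        induction t using TensorProduct.induction_on with
        | zero => simp only [zero_tmul, tmul_zero, map_zero]
        | add t1 t2 h1 h2 => simp only [add_tmul, tmul_add, map_add, h1, h2]
        | tmul c d =>
          induction u3 using TensorProduct.induction_on with
          | zero => simp only [tmul_zero, map_zero]
          | add v1 v2 h1 h2 => simp only [tmul_add, map_add, h1, h2]
          | tmul e f =>
            induction b using C.homog_ind with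
            | h0 => simp only [tmul_zero, zero_tmul, tmul_zero, map_zero]
            | hadd b1 b2 h1 h2 =>
                simp only [tmul_add, add_tmul, map_add, h1, h2]
            | hg gb b hb =>
              induction c using C.homog_ind with
              | h0 => simp only [tmul_zero, zero_tmul, map_zero]
              | hadd c1 c2 h1 h2 => simp only [tmul_add, add_tmul, map_add, h1, h2]
              | hg gc c hc =>
                induction d using C.homog_ind with
                | h0 => simp only [tmul_zero, zero_tmul, map_zero]
                | hadd d1 d2 h1 h2 => simp only [tmul_add, add_tmul, map_add, h1, h2]
                | hg gd d hd =>
                  induction e using C.homog_ind with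
                  | h0 => simp only [tmul_zero, zero_tmul, map_zero]
                  | hadd e1 e2 h1 h2 => simp only [tmul_add, add_tmul, map_add, h1, h2]
                  | hg ge e he =>
                    simp only [TensorProduct.map_tmul, LinearMap.id_coe, id_eq,
                      LinearEquiv.coe_coe, TensorProduct.assoc_tmul]
                    rw [C.mu2_tmul gb gc b c hb hc, C.mu2_tmul gd ge d e hd he]
                    simp only [map_smul, ← smul_tmul', tmul_smul]
                    rw [C.mu2_tmul (gb*gd) ge (C.mul (b ⊗ₜ[k] d)) e
                        (C.mul_mem gb gd b d hb hd) he,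
                      C.mu2_tmul gb (gc*ge) b (C.mul (c ⊗ₜ[k] e)) hb
                        (C.mul_mem gc ge c e hc he)]
                    simp only [smul_smul, C.φ_mul_left, C.φ_mul_right]
                    rw [C.mul_assoc', C.mul_assoc']
                    ring_nf

end ColorHopfAlg
end Aux5
section Aux6
namespace ColorHopfAlg
variable {k : Type*} [Field k] {G : Type*} [CommGroup G]
variable {H : Type*} [AddCommGroup H] [Module k H] (C : ColorHopfAlg k G H)
open TensorProduct LinearMap

lemma mu2_apply (t : (H ⊗[k] H) ⊗[k] (H ⊗[k] H)) :
    C.mu2 t = (TensorProduct.map C.mul C.mul) (midMap k C.braid t) := rfl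

lemma antipode_left_comp :
    (C.mul ∘ₗ TensorProduct.map C.antipode LinearMap.id) ∘ₗ C.comul = C.uE := by
  ext z
  simp only [LinearMap.comp_apply]
  rw [C.antipode_left z, uE_apply]

lemma antipode_right_comp :
    (C.mul ∘ₗ TensorProduct.map LinearMap.id C.antipode) ∘ₗ C.comul = C.uE := by
  ext z
  simp only [LinearMap.comp_apply]
  rw [C.antipode_right z, uE_apply]

/-- F6 : `Δ * (Δ∘S) = u` in the convolution algebra `Hom(H, H⊗H)`. -/
lemma conv2_comul_comulS :
    C.mu2 ∘ₗ TensorProduct.map C.comul (C.comul ∘ₗ C.antipode) ∘ₗ C.comul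
      = LinearMap.toSpanSingleton k (H ⊗[k] H) (C.one ⊗ₜ[k] C.one) ∘ₗ C.counit := by
  ext x
  simp only [LinearMap.comp_apply]
  have e1 : (TensorProduct.map C.comul (C.comul ∘ₗ C.antipode)) (C.comul x)
      = (TensorProduct.map C.comul C.comul)
          ((TensorProduct.map LinearMap.id C.antipode) (C.comul x)) := by
    rw [map_merge]
    simp only [LinearMap.comp_id, LinearMap.id_comp]
  rw [e1, ← C.comul_mul_pt, C.antipode_right x]
  simp only [map_smul, C.comul_one, LinearMap.toSpanSingleton_apply]

lemma braid_antipode_pt (a b : H) :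
    C.braid (C.antipode a ⊗ₜ[k] b)
      = (TensorProduct.map LinearMap.id C.antipode) (C.braid (a ⊗ₜ[k] b)) := by
  induction a using C.homog_ind with
  | h0 => simp
  | hadd a1 a2 h1 h2 => simp only [map_add, add_tmul, h1, h2]
  | hg ga a ha =>
    induction b using C.homog_ind with
    | h0 => simp
    | hadd b1 b2 h1 h2 => simp only [map_add, tmul_add, h1, h2]
    | hg gb b hb =>
      rw [C.braid_apply ga gb (C.antipode a) b (C.antipode_mem ga a ha) hb,
        C.braid_apply ga gb a b ha hb]
      simp

/-- F7a : `midMap` commutes with `S⊗S` on the first factor appropriately. -/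
lemma mid_antipode (t : (H ⊗[k] H) ⊗[k] (H ⊗[k] H)) :
    midMap k C.braid ((TensorProduct.map (TensorProduct.map C.antipode C.antipode) LinearMap.id) t)
      = (TensorProduct.map (TensorProduct.map C.antipode LinearMap.id)
          (TensorProduct.map C.antipode LinearMap.id)) (midMap k C.braid t) := by
  induction t using TensorProduct.induction_on with
  | zero => simp
  | add t1 t2 h1 h2 => simp only [map_add, h1, h2]
  | tmul u v =>
    induction u using TensorProduct.induction_on with
    | zero => simp only [zero_tmul, map_zero]
    | add u1 u2 h1 h2 => simp only [add_tmul, map_add, h1, h2]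
    | tmul x y =>
      induction v using TensorProduct.induction_on with
      | zero => simp only [tmul_zero, map_zero]
      | add v1 v2 h1 h2 => simp only [tmul_add, map_add, h1, h2]
      | tmul z w =>
        simp only [midMap, LinearMap.comp_apply, LinearEquiv.coe_coe,
          TensorProduct.map_tmul, LinearMap.id_coe, id_eq, TensorProduct.assoc_tmul,
          TensorProduct.assoc_symm_tmul]
        rw [C.braid_antipode_pt y z]
        generalize C.braid (y ⊗ₜ[k] z) = v
        induction v using TensorProduct.induction_on with
        | zero => simp
        | add v1 v2 h1 h2 => simp only [map_add, tmul_add, add_tmul, h1, h2]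
        | tmul z' y' => simp

/-- `midMap` against the reassociation `ρ` in terms of a braid on the middle pair. -/
lemma mid_rho (s : (H ⊗[k] (H ⊗[k] H)) ⊗[k] H) :
    midMap k C.braid
        ((TensorProduct.assoc k (H ⊗[k] H) H H)
          ((TensorProduct.map (TensorProduct.assoc k H H H).symm.toLinearMap LinearMap.id) s))
      = (TensorProduct.assoc k (H ⊗[k] H) H H)
          ((TensorProduct.map (TensorProduct.assoc k H H H).symm.toLinearMap LinearMap.id)
            ((TensorProduct.map (TensorProduct.map LinearMap.id C.braid) LinearMap.id) s)) := by
  induction s using TensorProduct.induction_on with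
  | zero => simp
  | add s1 s2 h1 h2 => simp only [map_add, h1, h2]
  | tmul q d =>
    induction q using TensorProduct.induction_on with
    | zero => simp only [zero_tmul, map_zero]
    | add q1 q2 h1 h2 => simp only [add_tmul, map_add, h1, h2]
    | tmul a u =>
      induction u using TensorProduct.induction_on with
      | zero => simp only [tmul_zero, zero_tmul, map_zero]
      | add u1 u2 h1 h2 => simp only [tmul_add, add_tmul, map_add, h1, h2]
      | tmul y z =>
        simp only [TensorProduct.map_tmul, LinearMap.id_coe, id_eq, LinearEquiv.coe_coe,
          LinearEquiv.coe_toLinearMap, TensorProduct.assoc_symm_tmul, TensorProduct.assoc_tmul,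
          midMap, LinearMap.comp_apply]
        generalize C.braid (y ⊗ₜ[k] z) = v
        induction v using TensorProduct.induction_on with
        | zero => simp
        | add v1 v2 h1 h2 => simp only [map_add, tmul_add, add_tmul, h1, h2]
        | tmul v1 v2 => simp

lemma assoc_first_slot (Y : (H ⊗[k] H) ⊗[k] H) :
    (TensorProduct.assoc k (H ⊗[k] H) H H)
        ((TensorProduct.map (TensorProduct.map C.comul LinearMap.id) LinearMap.id) Y)
      = (TensorProduct.map C.comul LinearMap.id) ((TensorProduct.assoc k H H H) Y) := by
  induction Y using TensorProduct.induction_on with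
  | zero => simp
  | add y1 y2 h1 h2 => simp only [map_add, h1, h2]
  | tmul u r =>
    induction u using TensorProduct.induction_on with
    | zero => simp only [zero_tmul, map_zero]
    | add u1 u2 h1 h2 => simp only [add_tmul, map_add, h1, h2]
    | tmul a b => simp

lemma symm_assoc_cancel (w : ((H ⊗[k] H) ⊗[k] H) ⊗[k] H) :
    (TensorProduct.map (TensorProduct.assoc k H H H).symm.toLinearMap LinearMap.id)
        ((TensorProduct.map (TensorProduct.assoc k H H H).toLinearMap LinearMap.id) w) = w := by
  rw [map_merge]
  have : (TensorProduct.assoc k H H H).symm.toLinearMap ∘ₗ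
      (TensorProduct.assoc k H H H).toLinearMap = LinearMap.id := by
    ext t; simp
  rw [this]
  simp

/-- claim1 : `ρ(X x) = (Δ⊗Δ)(Δ x)`. -/
lemma rhoX (x : H) :
    (TensorProduct.assoc k (H ⊗[k] H) H H)
        ((TensorProduct.map (TensorProduct.assoc k H H H).symm.toLinearMap LinearMap.id)
          ((TensorProduct.map (TensorProduct.map LinearMap.id C.comul) LinearMap.id)
            ((TensorProduct.map C.comul LinearMap.id) (C.comul x))))
      = (TensorProduct.map C.comul C.comul) (C.comul x) := by
  have e1 : (TensorProduct.map (TensorProduct.map LinearMap.id C.comul) LinearMap.id)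
      ((TensorProduct.map C.comul LinearMap.id) (C.comul x))
      = (TensorProduct.map ((TensorProduct.map LinearMap.id C.comul) ∘ₗ C.comul) LinearMap.id)
          (C.comul x) := by
    rw [map_merge]
    simp only [LinearMap.id_comp]
  rw [e1, ← C.coassoc]
  have e2 : (TensorProduct.map ((TensorProduct.assoc k H H H).toLinearMap ∘ₗ
        TensorProduct.map C.comul LinearMap.id ∘ₗ C.comul) LinearMap.id) (C.comul x)
      = (TensorProduct.map (TensorProduct.assoc k H H H).toLinearMap LinearMap.id)
          ((TensorProduct.map (TensorProduct.map C.comul LinearMap.id) LinearMap.id)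
            ((TensorProduct.map C.comul LinearMap.id) (C.comul x))) := by
    rw [map_merge, map_merge]
    simp only [LinearMap.id_comp, LinearMap.comp_assoc]
  rw [e2, symm_assoc_cancel, assoc_first_slot, C.coassoc_pt, map_merge]
  simp only [LinearMap.comp_id, LinearMap.id_comp]

/-- F7b : `midMap` acts as the identity on `(Δ⊗Δ)(Δ x)` (cocommutativity). -/
lemma mid_comul3 (x : H) :
    midMap k C.braid ((TensorProduct.map C.comul C.comul) (C.comul x))
      = (TensorProduct.map C.comul C.comul) (C.comul x) := by
  rw [← C.rhoX x, C.mid_rho]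
  have hcomp : (TensorProduct.map LinearMap.id C.braid) ∘ₗ
      (TensorProduct.map LinearMap.id C.comul)
      = TensorProduct.map (LinearMap.id : H →ₗ[k] H) C.comul := by
    apply TensorProduct.ext'
    intro a b
    simp only [LinearMap.comp_apply, TensorProduct.map_tmul, LinearMap.id_coe, id_eq]
    rw [C.cocomm_pt]
  have e1 : (TensorProduct.map (TensorProduct.map LinearMap.id C.braid) LinearMap.id)
      ((TensorProduct.map (TensorProduct.map LinearMap.id C.comul) LinearMap.id)
        ((TensorProduct.map C.comul LinearMap.id) (C.comul x)))
      = (TensorProduct.map (TensorProduct.map LinearMap.id C.comul) LinearMap.id)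
          ((TensorProduct.map C.comul LinearMap.id) (C.comul x)) := by
    rw [map_merge, hcomp]
    simp only [LinearMap.id_comp]
  rw [e1]

/-- F7 : `((S⊗S)∘Δ) * Δ = u` in the convolution algebra `Hom(H, H⊗H)`. -/
lemma conv2_SS_comul :
    C.mu2 ∘ₗ TensorProduct.map (TensorProduct.map C.antipode C.antipode ∘ₗ C.comul) C.comul ∘ₗ C.comul
      = LinearMap.toSpanSingleton k (H ⊗[k] H) (C.one ⊗ₜ[k] C.one) ∘ₗ C.counit := by
  ext x
  simp only [LinearMap.comp_apply]
  have e1 : (TensorProduct.map (TensorProduct.map C.antipode C.antipode ∘ₗ C.comul) C.comul)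
      (C.comul x)
      = (TensorProduct.map (TensorProduct.map C.antipode C.antipode) LinearMap.id)
          ((TensorProduct.map C.comul C.comul) (C.comul x)) := by
    rw [map_merge]
    simp only [LinearMap.id_comp]
  rw [e1, C.mu2_apply, C.mid_antipode, C.mid_comul3]
  rw [map_merge]
  have e2 : (TensorProduct.map (C.mul ∘ₗ TensorProduct.map C.antipode LinearMap.id)
        (C.mul ∘ₗ TensorProduct.map C.antipode LinearMap.id))
      ((TensorProduct.map C.comul C.comul) (C.comul x))
      = (TensorProduct.map ((C.mul ∘ₗ TensorProduct.map C.antipode LinearMap.id) ∘ₗ C.comul)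
          ((C.mul ∘ₗ TensorProduct.map C.antipode LinearMap.id) ∘ₗ C.comul)) (C.comul x) := by
    rw [map_merge]
  rw [e2, C.antipode_left_comp]
  have e3 : (TensorProduct.map C.uE C.uE) (C.comul x)
      = (TensorProduct.map (LinearMap.toSpanSingleton k H C.one) C.uE)
          ((TensorProduct.map C.counit LinearMap.id) (C.comul x)) := by
    rw [map_merge]
    simp only [LinearMap.comp_id]
    rfl
  rw [e3, C.counitL_pt]
  simp only [TensorProduct.map_tmul, LinearMap.toSpanSingleton_apply, one_smul, uE_apply,
    tmul_smul]

/-- The antipode is a morphism of coalgebras : `Δ ∘ S = (S ⊗ S) ∘ Δ`. -/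
theorem comul_antipode :
    C.comul ∘ₗ C.antipode = TensorProduct.map C.antipode C.antipode ∘ₗ C.comul := by
  have hassoc := C.conv_assoc C.mu2 C.mu2_assoc_pt
    (TensorProduct.map C.antipode C.antipode ∘ₗ C.comul) C.comul (C.comul ∘ₗ C.antipode)
  rw [C.conv2_SS_comul, C.conv2_comul_comulS] at hassoc
  rw [C.conv_unit_left C.mu2 (C.one ⊗ₜ[k] C.one) C.mu2_one_left (C.comul ∘ₗ C.antipode)] at hassoc
  rw [C.conv_unit_right C.mu2 (C.one ⊗ₜ[k] C.one) C.mu2_one_right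
    (TensorProduct.map C.antipode C.antipode ∘ₗ C.comul)] at hassoc
  exact hassoc

end ColorHopfAlg
end Aux6
section Aux7
namespace ColorHopfAlg
variable {k : Type*} [Field k] {G : Type*} [CommGroup G]
variable {H : Type*} [AddCommGroup H] [Module k H] (C : ColorHopfAlg k G H)
open TensorProduct LinearMap

lemma counit_mul_pt (t : H ⊗[k] H) :
    C.counit (C.mul t) = (LinearMap.mul' k k) ((TensorProduct.map C.counit C.counit) t) := by
  induction t using TensorProduct.induction_on with
  | zero => simp
  | add t1 t2 h1 h2 => simp only [map_add, h1, h2]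
  | tmul a b => simp [C.counit_mul a b]

lemma counit_antipode (x : H) : C.counit (C.antipode x) = C.counit x := by
  have h1 : C.counit (C.mul ((TensorProduct.map C.antipode LinearMap.id) (C.comul x)))
      = C.counit x := by
    rw [C.antipode_left x]
    simp [C.counit_one]
  rw [C.counit_mul_pt, map_merge] at h1
  simp only [LinearMap.comp_id] at h1
  have e2 : (TensorProduct.map (C.counit ∘ₗ C.antipode) C.counit) (C.comul x)
      = (TensorProduct.map (C.counit ∘ₗ C.antipode) (LinearMap.id : k →ₗ[k] k))
          ((TensorProduct.map LinearMap.id C.counit) (C.comul x)) := by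
    rw [map_merge]
    simp only [LinearMap.comp_id, LinearMap.id_comp]
  rw [e2, C.counitR_pt] at h1
  simpa using h1

lemma mul_assoc_map_pt (u : (H ⊗[k] H) ⊗[k] H) :
    C.mul ((TensorProduct.map C.mul LinearMap.id) u)
      = C.mul ((TensorProduct.map LinearMap.id C.mul) ((TensorProduct.assoc k H H H) u)) := by
  induction u using TensorProduct.induction_on with
  | zero => simp
  | add u1 u2 h1 h2 => simp only [map_add, h1, h2]
  | tmul s z =>
    induction s using TensorProduct.induction_on with
    | zero => simp only [zero_tmul, map_zero]
    | add s1 s2 h1 h2 => simp only [add_tmul, map_add, h1, h2]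
    | tmul x y =>
      simp only [TensorProduct.map_tmul, LinearMap.id_coe, id_eq, LinearEquiv.coe_coe,
        TensorProduct.assoc_tmul]
      exact C.mul_assoc' x y z

/-- `S ∘ S = id`. -/
theorem antipode_antipode : C.antipode ∘ₗ C.antipode = LinearMap.id := by
  have hI : C.mul ∘ₗ TensorProduct.map LinearMap.id C.antipode ∘ₗ C.comul = C.uE := by
    ext x
    simp only [LinearMap.comp_apply]
    rw [C.antipode_right x, uE_apply]
  have hB : C.mul ∘ₗ TensorProduct.map C.antipode (C.antipode ∘ₗ C.antipode) ∘ₗ C.comul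
      = C.uE := by
    ext x
    simp only [LinearMap.comp_apply]
    have e1 : (TensorProduct.map C.antipode (C.antipode ∘ₗ C.antipode)) (C.comul x)
        = (TensorProduct.map LinearMap.id C.antipode)
            ((TensorProduct.map C.antipode C.antipode) (C.comul x)) := by
      rw [map_merge]
      simp only [LinearMap.id_comp]
    have e2 : (TensorProduct.map C.antipode C.antipode) (C.comul x)
        = C.comul (C.antipode x) := by
      have := LinearMap.congr_fun C.comul_antipode x
      simpa using this.symm
    rw [e1, e2, C.antipode_right (C.antipode x), C.counit_antipode x, uE_apply]
  have hassoc := C.conv_assoc C.mul C.mul_assoc_map_pt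
    LinearMap.id C.antipode (C.antipode ∘ₗ C.antipode)
  rw [hI, hB] at hassoc
  have uEdef : C.uE = LinearMap.toSpanSingleton k H C.one ∘ₗ C.counit := rfl
  rw [uEdef] at hassoc
  rw [C.conv_unit_left C.mul C.one C.one_mul' (C.antipode ∘ₗ C.antipode)] at hassoc
  rw [C.conv_unit_right C.mul C.one C.mul_one' LinearMap.id] at hassoc
  exact hassoc

lemma antipode_antipode_pt (x : H) : C.antipode (C.antipode x) = x := by
  have := LinearMap.congr_fun C.antipode_antipode x
  simpa using this

end ColorHopfAlg
end Aux7
section Aux8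
namespace ColorHopfAlg
variable {k : Type*} [Field k] {G : Type*} [CommGroup G]
variable {H : Type*} [AddCommGroup H] [Module k H] (C : ColorHopfAlg k G H)
open TensorProduct LinearMap

lemma mem_prodSpan_of (V W : Submodule k H) {x y : H} (hx : x ∈ V) (hy : y ∈ W) :
    C.mul (x ⊗ₜ[k] y) ∈ C.prodSpan V W :=
  Submodule.subset_span ⟨x, hx, y, hy, rfl⟩

lemma braid_mem_span (M K : Submodule k H) (hM : C.IsCHSub M) (hK : C.IsCHSub K)
    {m y : H} (hm : m ∈ M) (hy : y ∈ K) :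
    C.braid (m ⊗ₜ[k] y) ∈
      Submodule.span k {t : H ⊗[k] H | ∃ u ∈ K, ∃ v ∈ M, t = u ⊗ₜ[k] v} := by
  have h1 := hM.graded m hm
  clear hm
  induction h1 using Submodule.span_induction with
  | mem m' hm' =>
    obtain ⟨hm'M, g, hg⟩ := hm'
    have h2 := hK.graded y hy
    clear hy
    induction h2 using Submodule.span_induction with
    | mem y' hy' =>
      obtain ⟨hy'K, g', hg'⟩ := hy'
      rw [C.braid_apply g g' m' y' hg hg']
      exact Submodule.smul_mem _ _ (Submodule.subset_span ⟨y', hy'K, m', hm'M, rfl⟩)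
    | zero => rw [tmul_zero, map_zero]; exact Submodule.zero_mem _
    | add a b _ _ ha hb =>
      rw [tmul_add, map_add]; exact Submodule.add_mem _ ha hb
    | smul r a _ ha =>
      rw [tmul_smul, map_smul]; exact Submodule.smul_mem _ _ ha
  | zero => rw [zero_tmul, map_zero]; exact Submodule.zero_mem _
  | add a b _ _ ha hb =>
    rw [add_tmul, map_add]; exact Submodule.add_mem _ ha hb
  | smul r a _ ha =>
    rw [← smul_tmul', map_smul]; exact Submodule.smul_mem _ _ ha

/-- `M·K ⊆ span(K·M)` : membership form, using the `T` identity. -/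
lemma mulMK_mem (M K : Submodule k H) (hM : C.IsCHSub M) (hK : C.IsCHSub K)
    (hKn : C.IsNormal K) {x y : H} (hx : x ∈ M) (hy : y ∈ K) :
    C.mul (x ⊗ₜ[k] y) ∈ C.prodSpan K M := by
  rw [← C.T_pt x y]
  obtain ⟨s, hs⟩ := hM.comul_mem x hx
  rw [← hs]
  clear hs hx
  induction s using TensorProduct.induction_on with
  | zero => simp only [map_zero, zero_tmul]; exact Submodule.zero_mem _
  | add s1 s2 h1 h2 =>
    simp only [map_add, add_tmul]
    exact Submodule.add_mem _ h1 h2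
  | tmul m1 m2 =>
    simp only [TensorProduct.map_tmul, Submodule.coe_subtype, TensorProduct.assoc_tmul,
      LinearEquiv.coe_coe, LinearMap.id_coe, id_eq]
    have hc := C.braid_mem_span M K hM hK m2.2 hy
    have key : ∀ u ∈ Submodule.span k {t : H ⊗[k] H | ∃ u ∈ K, ∃ v ∈ M, t = u ⊗ₜ[k] v},
        C.mul ((TensorProduct.map C.adj LinearMap.id)
          ((TensorProduct.assoc k H H H).symm ((m1 : H) ⊗ₜ[k] u))) ∈ C.prodSpan K M := by
      intro u hu
      induction hu using Submodule.span_induction with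
      | mem t ht =>
        obtain ⟨u', hu'K, v', hv'M, rfl⟩ := ht
        simp only [TensorProduct.assoc_symm_tmul, TensorProduct.map_tmul,
          LinearMap.id_coe, id_eq]
        exact C.mem_prodSpan_of K M (hKn (m1 : H) u' hu'K) hv'M
      | zero => simp only [tmul_zero, map_zero]; exact Submodule.zero_mem _
      | add a b _ _ ha hb =>
        simp only [tmul_add, map_add]; exact Submodule.add_mem _ ha hb
      | smul r a _ ha =>
        simp only [tmul_smul, map_smul]; exact Submodule.smul_mem _ _ ha
    exact key _ hc

/-- membership form of the `W` identity : `Q2(n ⊗ x) ∈ span(M·K)` for `n ∈ M`, `x ∈ K`. -/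
lemma Q2_mem (M K : Submodule k H) (hM : C.IsCHSub M) (hK : C.IsCHSub K)
    (hKn : C.IsNormal K) {n x : H} (hn : n ∈ M) (hx : x ∈ K) :
    C.Q2 (n ⊗ₜ[k] x) ∈ C.prodSpan M K := by
  rw [← C.W_pt n x]
  obtain ⟨s, hs⟩ := hM.comul_mem n hn
  rw [← hs]
  clear hs hn
  induction s using TensorProduct.induction_on with
  | zero => simp only [map_zero, zero_tmul]; exact Submodule.zero_mem _
  | add s1 s2 h1 h2 =>
    simp only [map_add, add_tmul]
    exact Submodule.add_mem _ h1 h2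
  | tmul m1 m2 =>
    simp only [TensorProduct.map_tmul, Submodule.coe_subtype, TensorProduct.assoc_tmul,
      LinearEquiv.coe_coe, LinearMap.id_coe, id_eq]
    exact C.mem_prodSpan_of M K (hM.antipode_mem (m1 : H) m1.2) (hKn (m2 : H) x hx)

/-- `K·M ⊆ span(M·K)` : membership form, using the `W` identity and `S² = id`. -/
lemma mulKM_mem (M K : Submodule k H) (hM : C.IsCHSub M) (hK : C.IsCHSub K)
    (hKn : C.IsNormal K) {x y : H} (hx : x ∈ K) (hy : y ∈ M) :
    C.mul (x ⊗ₜ[k] y) ∈ C.prodSpan M K := by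
  have h1 := hM.graded y hy
  clear hy
  induction h1 using Submodule.span_induction with
  | mem y' hy' =>
    obtain ⟨hyM, b, hgb⟩ := hy'
    have h2 := hK.graded x hx
    clear hx
    induction h2 using Submodule.span_induction with
    | mem x' hx' =>
      obtain ⟨hxK, t, hgt⟩ := hx'
      have hnM : C.antipode y' ∈ M := hM.antipode_mem y' hyM
      have hnb : C.antipode y' ∈ C.grade b := C.antipode_mem b y' hgb
      have hQ : C.Q2 (C.antipode y' ⊗ₜ[k] x') = C.φ b t • C.mul (x' ⊗ₜ[k] y') := by
        rw [Q2]
        simp only [LinearMap.comp_apply]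
        rw [C.braid_apply b t (C.antipode y') x' hnb hgt]
        simp only [map_smul, TensorProduct.map_tmul, LinearMap.id_coe, id_eq]
        rw [C.antipode_antipode_pt y']
      have hW := C.Q2_mem M K hM hK hKn hnM hxK
      have heq : C.mul (x' ⊗ₜ[k] y') = (C.φ b t)⁻¹ • C.Q2 (C.antipode y' ⊗ₜ[k] x') := by
        rw [hQ, smul_smul, inv_mul_cancel₀ (C.φ_ne b t), one_smul]
      rw [heq]
      exact Submodule.smul_mem _ _ hW
    | zero => rw [zero_tmul, map_zero]; exact Submodule.zero_mem _
    | add a b' _ _ ha hb =>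
      rw [add_tmul, map_add]; exact Submodule.add_mem _ ha hb
    | smul r a _ ha =>
      rw [← smul_tmul', map_smul]; exact Submodule.smul_mem _ _ ha
  | zero => rw [tmul_zero, map_zero]; exact Submodule.zero_mem _
  | add a b _ _ ha hb =>
    rw [tmul_add, map_add]; exact Submodule.add_mem _ ha hb
  | smul r a _ ha =>
    rw [tmul_smul, map_smul]; exact Submodule.smul_mem _ _ ha

end ColorHopfAlg
end Aux8

section Statements

variable {H : Type*} [AddCommGroup H] [Module k H]

/-- if `K` is a normal color Hopf subalgebra and `M` a color Hopf
subalgebra of a cocommutative color Hopf algebra `A`, then `KM = MK` as graded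
subspaces. -/
theorem KM_eq_MK (C : ColorHopfAlg k G H)
    (M K : Submodule k H) (hM : C.IsCHSub M) (hK : C.IsCHSub K)
    (hKn : C.IsNormal K) :
    C.prodSpan K M = C.prodSpan M K := by
  apply le_antisymm
  · apply Submodule.span_le.mpr
    rintro z ⟨x, hx, y, hy, rfl⟩
    exact C.mulKM_mem M K hM hK hKn hx hy
  · apply Submodule.span_le.mpr
    rintro z ⟨x, hx, y, hy, rfl⟩
    exact C.mulMK_mem M K hM hK hKn hx hy

end Statements

end ColorHopfPaper
end
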